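/- arXiv:1709.02029 — 12 statements merged into one kernel-verified Lean document; each statement's English description precedes it below -/
import Mathlib

section
/- For any vectors x, y, z in a complex inner product space H, the inequality (‖x‖²‖z‖² − |⟨x,z⟩|²)(‖y‖²‖z‖² − |⟨y,z⟩|²) ≥ |⟨x,y⟩‖z‖² − ⟨x,z⟩⟨z,y⟩|² holds. -/
open scoped ComplexConjugate
local notation "⟪" x ", " y "⟫" => @inner ℂ _ _ x y

theorem schwarz_quadruple {H : Type*} [NormedAddCommGroup H] [InnerProductSpace ℂ H]
    (x y z : H) :
    (‖x‖ ^ 2 * ‖z‖ ^ 2 - ‖⟪x, z⟫‖ ^ 2) * (‖y‖ ^ 2 * ‖z‖ ^ 2 - ‖⟪y, z⟫‖ ^ 2) ≥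
      ‖⟪x, y⟫ * (‖z‖ : ℂ) ^ 2 - ⟪x, z⟫ * ⟪z, y⟫‖ ^ 2 := by
  rcases eq_or_ne z 0 with hz | hz
  · simp [hz]
  set a : ℂ := (‖z‖ : ℂ) ^ 2 with ha
  set u : H := a • x - ⟪z, x⟫ • z with hu
  set v : H := a • y - ⟪z, y⟫ • z with hv
  have hzz : ⟪z, z⟫ = a := by
    rw [ha]; exact_mod_cast inner_self_eq_norm_sq_to_K z
  have habs : ∀ w : H, ⟪w, z⟫ * ⟪z, w⟫ = ((‖⟪w, z⟫‖ : ℝ) : ℂ) ^ 2 := by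
    intro w
    rw [← inner_conj_symm z w, Complex.mul_conj, Complex.normSq_eq_norm_sq]
    push_cast; ring
  have hxx : ∀ w : H, ⟪w, w⟫ = ((‖w‖ : ℝ) : ℂ) ^ 2 := fun w => by
    exact_mod_cast inner_self_eq_norm_sq_to_K w
  have huv : ⟪u, v⟫ = a * (⟪x, y⟫ * a - ⟪x, z⟫ * ⟪z, y⟫) := by
    simp only [hu, hv, inner_sub_left, inner_sub_right, inner_smul_left, inner_smul_right,
      hzz, inner_conj_symm, ha, Complex.conj_ofReal, map_pow]
    ring
  have hwnorm : ∀ w : H, ⟪a • w - ⟪z, w⟫ • z, a • w - ⟪z, w⟫ • z⟫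
      = a * ((‖w‖ : ℂ) ^ 2 * a - ((‖⟪w, z⟫‖ : ℝ) : ℂ) ^ 2) := by
    intro w
    simp only [inner_sub_left, inner_sub_right, inner_smul_left, inner_smul_right,
      hzz, inner_conj_symm, ha, Complex.conj_ofReal, map_pow]
    linear_combination ((‖z‖ : ℂ) ^ 2) ^ 2 * hxx w - ((‖z‖ : ℂ) ^ 2) * habs w
  have hnorm : ∀ w : H, ‖a • w - ⟪z, w⟫ • z‖ ^ 2
      = ‖z‖ ^ 2 * (‖w‖ ^ 2 * ‖z‖ ^ 2 - ‖⟪w, z⟫‖ ^ 2) := by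
    intro w
    have h1 : (‖a • w - ⟪z, w⟫ • z‖ : ℝ) ^ 2 = Complex.re ⟪a • w - ⟪z, w⟫ • z, a • w - ⟪z, w⟫ • z⟫ := by
      exact_mod_cast (norm_sq_eq_re_inner (𝕜 := ℂ) _)
    have h2 : ⟪a • w - ⟪z, w⟫ • z, a • w - ⟪z, w⟫ • z⟫
        = ((‖z‖ ^ 2 * (‖w‖ ^ 2 * ‖z‖ ^ 2 - ‖⟪w, z⟫‖ ^ 2) : ℝ) : ℂ) := by
      rw [hwnorm w, ha]; push_cast; ring
    rw [h1, h2, Complex.ofReal_re]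
  have hcs : ‖⟪u, v⟫‖ ^ 2 ≤ ‖u‖ ^ 2 * ‖v‖ ^ 2 := by
    have := norm_inner_le_norm (𝕜 := ℂ) u v
    nlinarith [norm_nonneg ⟪u, v⟫, norm_nonneg u, norm_nonneg v]
  have habsuv : ‖⟪u, v⟫‖ = ‖z‖ ^ 2 * ‖⟪x, y⟫ * (‖z‖ : ℂ) ^ 2 - ⟪x, z⟫ * ⟪z, y⟫‖ := by
    rw [huv, norm_mul, ha]
    congr 1
    simp [Complex.norm_real, abs_of_nonneg (sq_nonneg ‖z‖)]
  have hun : ‖u‖ ^ 2 = ‖z‖ ^ 2 * (‖x‖ ^ 2 * ‖z‖ ^ 2 - ‖⟪x, z⟫‖ ^ 2) := by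
    rw [hu]; exact hnorm x
  have hvn : ‖v‖ ^ 2 = ‖z‖ ^ 2 * (‖y‖ ^ 2 * ‖z‖ ^ 2 - ‖⟪y, z⟫‖ ^ 2) := by
    rw [hv]; exact hnorm y
  rw [habsuv, hun, hvn] at hcs
  have hz4 : (0:ℝ) < ‖z‖ ^ 2 * ‖z‖ ^ 2 := by have := norm_pos_iff.mpr hz; positivity
  rw [ge_iff_le, ha, ← mul_le_mul_iff_of_pos_left hz4]
  calc ‖z‖ ^ 2 * ‖z‖ ^ 2 * ‖⟪x, y⟫ * (‖z‖ : ℂ) ^ 2 - ⟪x, z⟫ * ⟪z, y⟫‖ ^ 2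
      = (‖z‖ ^ 2 * ‖⟪x, y⟫ * (‖z‖ : ℂ) ^ 2 - ⟪x, z⟫ * ⟪z, y⟫‖) ^ 2 := by ring
    _ ≤ ‖z‖ ^ 2 * (‖x‖ ^ 2 * ‖z‖ ^ 2 - ‖⟪x, z⟫‖ ^ 2) *
        (‖z‖ ^ 2 * (‖y‖ ^ 2 * ‖z‖ ^ 2 - ‖⟪y, z⟫‖ ^ 2)) := hcs
    _ = ‖z‖ ^ 2 * ‖z‖ ^ 2 * ((‖x‖ ^ 2 * ‖z‖ ^ 2 - ‖⟪x, z⟫‖ ^ 2) *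
        (‖y‖ ^ 2 * ‖z‖ ^ 2 - ‖⟪y, z⟫‖ ^ 2)) := by ring
end

section
/- For any vectors x, y, e in a complex inner product space H with ‖e‖ = 1, one has ‖x‖‖y‖ ≥ |⟨x,y⟩ − ⟨x,e⟩⟨e,y⟩| + |⟨x,e⟩⟨e,y⟩| ≥ |⟨x,y⟩|. -/
open scoped ComplexConjugate
local notation "⟪" x ", " y "⟫" => @inner ℂ _ _ x y

theorem schwarz_refinement {H : Type*} [NormedAddCommGroup H] [InnerProductSpace ℂ H]
    (x y e : H) (he : ‖e‖ = 1) :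
    ‖x‖ * ‖y‖ ≥ ‖⟪x, y⟫ - ⟪x, e⟫ * ⟪e, y⟫‖ + ‖⟪x, e⟫ * ⟪e, y⟫‖ ∧
    ‖⟪x, y⟫ - ⟪x, e⟫ * ⟪e, y⟫‖ + ‖⟪x, e⟫ * ⟪e, y⟫‖ ≥
      ‖⟪x, y⟫‖ := by
  constructor
  · set a : ℂ := ⟪e, x⟫ with ha
    set b : ℂ := ⟪e, y⟫ with hb
    set x' : H := x - a • e with hx'
    set y' : H := y - b • e with hy'
    have hee : ⟪e, e⟫ = 1 := by
      rw [inner_self_eq_norm_sq_to_K, he]; norm_num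
    have hxe : ⟪x, e⟫ = conj a := by rw [ha, inner_conj_symm]
    have hex' : ⟪e, x'⟫ = 0 := by
      simp [hx', inner_sub_right, inner_smul_right, hee, he, ha]
    have hey' : ⟪e, y'⟫ = 0 := by
      simp [hy', inner_sub_right, inner_smul_right, hee, he, hb]
    have hkey : ⟪x', y'⟫ = ⟪x, y⟫ - ⟪x, e⟫ * ⟪e, y⟫ := by
      simp only [hx', hy', inner_sub_left, inner_sub_right, inner_smul_left,
        inner_smul_right, hee, mul_one, hxe]
      rw [← hb]
      ring
    have hnx : ‖x‖ ^ 2 = ‖x'‖ ^ 2 + ‖a‖ ^ 2 := by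
      have : x = x' + a • e := by rw [hx']; abel
      have hp := norm_add_sq_eq_norm_sq_add_norm_sq_of_inner_eq_zero (𝕜 := ℂ) x' (a • e)
        (by rw [inner_smul_right, show ⟪x', e⟫ = conj ⟪e, x'⟫ from (inner_conj_symm _ _).symm,
          hex']; simp)
      rw [this, sq, hp, norm_smul, he, mul_one]
      simp [sq]
    have hny : ‖y‖ ^ 2 = ‖y'‖ ^ 2 + ‖b‖ ^ 2 := by
      have : y = y' + b • e := by rw [hy']; abel
      have hp := norm_add_sq_eq_norm_sq_add_norm_sq_of_inner_eq_zero (𝕜 := ℂ) y' (b • e)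
        (by rw [inner_smul_right, show ⟪y', e⟫ = conj ⟪e, y'⟫ from (inner_conj_symm _ _).symm,
          hey']; simp)
      rw [this, sq, hp, norm_smul, he, mul_one]
      simp [sq]
    have hcs : ‖⟪x', y'⟫‖ ≤ ‖x'‖ * ‖y'‖ := by
      simpa using norm_inner_le_norm (𝕜 := ℂ) x' y'
    have habs : ‖⟪x, e⟫ * ⟪e, y⟫‖ = ‖a‖ * ‖b‖ := by
      rw [norm_mul, hxe, hb, Complex.norm_conj]
    rw [← hkey, habs]
    have h2 : ‖x'‖ * ‖y'‖ + ‖a‖ * ‖b‖ ≤ ‖x‖ * ‖y‖ := by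
      nlinarith [sq_nonneg (‖x'‖ * ‖b‖ - ‖y'‖ * ‖a‖),
        mul_nonneg (norm_nonneg x) (norm_nonneg y), norm_nonneg x', norm_nonneg y',
        norm_nonneg a, norm_nonneg b,
        sq_nonneg (‖x‖ * ‖y‖ - ‖x'‖ * ‖y'‖ - ‖a‖ * ‖b‖)]
    linarith
  · calc ‖⟪x, y⟫‖
        = ‖(⟪x, y⟫ - ⟪x, e⟫ * ⟪e, y⟫) + ⟪x, e⟫ * ⟪e, y⟫‖ := by ring_nf
      _ ≤ _ := norm_add_le _ _
end

section
/- For nonzero vectors x, y, z in a complex inner product space, defining angles Ψ_{uv} ∈ [0, π/2] by cos Ψ_{uv} = |⟨u,v⟩|/(‖u‖‖v‖), the triangle inequality Ψ_{xy} ≤ Ψ_{xz} + Ψ_{zy} holds. -/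
open scoped ComplexConjugate
local notation "⟪" x ", " y "⟫" => @inner ℂ _ _ x y

lemma key_ineq {H : Type*} [NormedAddCommGroup H] [InnerProductSpace ℂ H]
    (u v w : H) (hu : ‖u‖ = 1) (hv : ‖v‖ = 1) (hw : ‖w‖ = 1) :
    ‖⟪u, w⟫‖ * ‖⟪w, v⟫‖ -
      Real.sqrt (1 - ‖⟪u, w⟫‖ ^ 2) * Real.sqrt (1 - ‖⟪w, v⟫‖ ^ 2)
      ≤ ‖⟪u, v⟫‖ := by
  set u' := u - ⟪w, u⟫ • w with hu'
  set v' := v - ⟪w, v⟫ • w with hv'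
  have hww : ⟪w, w⟫ = 1 := by
    rw [inner_self_eq_norm_sq_to_K, hw]; norm_num
  have huu : ⟪u, u⟫ = 1 := by
    rw [inner_self_eq_norm_sq_to_K, hu]; norm_num
  have hvv : ⟪v, v⟫ = 1 := by
    rw [inner_self_eq_norm_sq_to_K, hv]; norm_num
  have expand : ∀ a b : H, ⟪a - ⟪w, a⟫ • w, b - ⟪w, b⟫ • w⟫
      = ⟪a, b⟫ - ⟪a, w⟫ * ⟪w, b⟫ := by
    intro a b
    simp only [inner_sub_left, inner_sub_right, inner_smul_left, inner_smul_right,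
      hww, mul_one, inner_conj_symm]
    ring
  have h1 : ⟪u', v'⟫ = ⟪u, v⟫ - ⟪u, w⟫ * ⟪w, v⟫ := expand u v
  have habs : ∀ a : H, ⟪a, a⟫ = 1 → ‖a - ⟪w, a⟫ • w‖ ^ 2 = 1 - ‖⟪a, w⟫‖ ^ 2 := by
    intro a ha
    have h2 : ⟪a - ⟪w, a⟫ • w, a - ⟪w, a⟫ • w⟫ = 1 - ⟪a, w⟫ * ⟪w, a⟫ := by
      rw [expand a a, ha]
    have h3 : ⟪a, w⟫ * ⟪w, a⟫ = (‖⟪a, w⟫‖ ^ 2 : ℝ) := by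
      rw [← inner_conj_symm w a]
      rw [Complex.mul_conj']
      push_cast [Complex.sq_norm]
      rw [Complex.normSq_eq_norm_sq]
      norm_cast
    rw [← inner_self_eq_norm_sq (𝕜 := ℂ) (a - ⟪w, a⟫ • w), h2, h3]
    push_cast
    simp [← Complex.ofReal_pow]
  have hnu : ‖u'‖ ^ 2 = 1 - ‖⟪u, w⟫‖ ^ 2 := habs u huu
  have hnv : ‖v'‖ ^ 2 = 1 - ‖⟪w, v⟫‖ ^ 2 := by
    rw [← Complex.norm_conj, inner_conj_symm]; exact habs v hvv
  have hcs : ‖⟪u', v'⟫‖ ≤ ‖u'‖ * ‖v'‖ := by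
    simpa using norm_inner_le_norm (𝕜 := ℂ) u' v'
  have hsu : ‖u'‖ = Real.sqrt (1 - ‖⟪u, w⟫‖ ^ 2) := by
    rw [← hnu, Real.sqrt_sq (norm_nonneg _)]
  have hsv : ‖v'‖ = Real.sqrt (1 - ‖⟪w, v⟫‖ ^ 2) := by
    rw [← hnv, Real.sqrt_sq (norm_nonneg _)]
  have h4 : ‖⟪u, w⟫ * ⟪w, v⟫‖ - ‖⟪u', v'⟫‖ ≤ ‖⟪u, v⟫‖ := by
    have : ⟪u, w⟫ * ⟪w, v⟫ = ⟪u, v⟫ - ⟪u', v'⟫ := by rw [h1]; ring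
    rw [this]
    calc ‖⟪u, v⟫ - ⟪u', v'⟫‖ - ‖⟪u', v'⟫‖
        ≤ (‖⟪u, v⟫‖ + ‖⟪u', v'⟫‖) - ‖⟪u', v'⟫‖ := by
          have h := norm_sub_le ⟪u, v⟫ ⟪u', v'⟫
          linarith
      _ = ‖⟪u, v⟫‖ := by ring
  rw [norm_mul] at h4
  rw [← hsu, ← hsv]
  linarith

lemma unit_triangle {H : Type*} [NormedAddCommGroup H] [InnerProductSpace ℂ H]
    (u v w : H) (hu : ‖u‖ = 1) (hv : ‖v‖ = 1) (hw : ‖w‖ = 1) :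
    Real.arccos (‖⟪u, v⟫‖) ≤
      Real.arccos (‖⟪u, w⟫‖) + Real.arccos (‖⟪w, v⟫‖) := by
  set a := ‖⟪u, w⟫‖ with hadef
  set b := ‖⟪w, v⟫‖ with hbdef
  set c := ‖⟪u, v⟫‖ with hcdef
  have ha0 : 0 ≤ a := norm_nonneg _
  have hb0 : 0 ≤ b := norm_nonneg _
  have hc0 : 0 ≤ c := norm_nonneg _
  have bound : ∀ p q : H, ‖p‖ = 1 → ‖q‖ = 1 → ‖⟪p, q⟫‖ ≤ 1 := by
    intro p q hp hq
    have := norm_inner_le_norm (𝕜 := ℂ) p q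
    rw [hp, hq] at this
    simpa using this
  have ha1 : a ≤ 1 := bound u w hu hw
  have hb1 : b ≤ 1 := bound w v hw hv
  have hc1 : c ≤ 1 := bound u v hu hv
  rcases le_or_gt Real.pi (Real.arccos a + Real.arccos b) with h | h
  · exact le_trans (Real.arccos_le_pi c) h
  · have hsum0 : 0 ≤ Real.arccos a + Real.arccos b :=
      add_nonneg (Real.arccos_nonneg a) (Real.arccos_nonneg b)
    have hcos : Real.cos (Real.arccos a + Real.arccos b)
        = a * b - Real.sqrt (1 - a ^ 2) * Real.sqrt (1 - b ^ 2) := by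
      rw [Real.cos_add, Real.cos_arccos (by linarith) ha1, Real.cos_arccos (by linarith) hb1,
        Real.sin_arccos, Real.sin_arccos]
    have hkey := key_ineq u v w hu hv hw
    have hle : Real.cos (Real.arccos a + Real.arccos b) ≤ c := by
      rw [hcos]; exact hkey
    calc Real.arccos c ≤ Real.arccos (Real.cos (Real.arccos a + Real.arccos b)) := by
          have h' := Real.monotone_arcsin hle
          have e1 : Real.arccos c = Real.pi / 2 - Real.arcsin c := Real.arccos_eq_pi_div_two_sub_arcsin ..
          have e2 : Real.arccos (Real.cos (Real.arccos a + Real.arccos b))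
              = Real.pi / 2 - Real.arcsin (Real.cos (Real.arccos a + Real.arccos b)) :=
            Real.arccos_eq_pi_div_two_sub_arcsin ..
          rw [e1, e2]
          linarith
      _ = Real.arccos a + Real.arccos b := Real.arccos_cos hsum0 h.le

theorem angle_triangle {H : Type*} [NormedAddCommGroup H] [InnerProductSpace ℂ H]
    (x y z : H) (hx : x ≠ 0) (hy : y ≠ 0) (hz : z ≠ 0) :
    Real.arccos (‖⟪x, y⟫‖ / (‖x‖ * ‖y‖)) ≤
      Real.arccos (‖⟪x, z⟫‖ / (‖x‖ * ‖z‖)) +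
        Real.arccos (‖⟪z, y⟫‖ / (‖z‖ * ‖y‖)) := by
  have habs : ∀ a b : H, a ≠ 0 → b ≠ 0 →
      ‖⟪((‖a‖ : ℂ))⁻¹ • a, ((‖b‖ : ℂ))⁻¹ • b⟫‖
        = ‖⟪a, b⟫‖ / (‖a‖ * ‖b‖) := by
    intro a b ha hb
    have ha' : ‖a‖ ≠ 0 := norm_ne_zero_iff.mpr ha
    have hb' : ‖b‖ ≠ 0 := norm_ne_zero_iff.mpr hb
    rw [inner_smul_left, inner_smul_right]
    simp [norm_mul, Complex.norm_real, abs_of_nonneg, norm_nonneg]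
    field_simp
  have h := unit_triangle (((‖x‖ : ℂ))⁻¹ • x) (((‖y‖ : ℂ))⁻¹ • y)
      (((‖z‖ : ℂ))⁻¹ • z)
      (norm_smul_inv_norm hx) (norm_smul_inv_norm hy) (norm_smul_inv_norm hz)
  rwa [habs x y hx hy, habs x z hx hz, habs z y hz hy] at h
end

section
/- For any nonzero vectors x, y, z in a complex inner product space and any real p ≥ 2, (1 − |⟨x,y⟩|^p/(‖x‖^p‖y‖^p))^{1/p} ≤ (1 − |⟨x,z⟩|^p/(‖x‖^p‖z‖^p))^{1/p} + (1 − |⟨y,z⟩|^p/(‖y‖^p‖z‖^p))^{1/p}. -/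
open scoped ComplexConjugate
local notation "⟪" x ", " y "⟫" => @inner ℂ _ _ x y

open Real Set

variable {p : ℝ}



lemma key_poly {p : ℝ} (hp : 2 ≤ p) {c : ℝ} (hc0 : 0 ≤ c) (hc1 : c ≤ 1) :
    (1 - c ^ p) * c ^ 2 ≤ (p - 1) * (1 - c ^ 2) := by
  have hb : 1 + p * (c - 1) ≤ c ^ p := by
    have := one_add_mul_self_le_rpow_one_add (s := c - 1) (p := p) (by linarith) (by linarith)
    simpa using this
  have h1 : 1 - c ^ p ≤ p * (1 - c) := by linarith
  have h2 : p * c ^ 2 ≤ (p - 1) * (1 + c) := by nlinarith [mul_nonneg (sub_nonneg.2 hc1) (sub_nonneg.2 hc1), mul_le_mul_of_nonneg_left hc1 (by positivity : (0:ℝ) ≤ p * c)]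
  have hcp : 0 ≤ c ^ p := rpow_nonneg hc0 p
  calc (1 - c ^ p) * c ^ 2 ≤ p * (1 - c) * c ^ 2 := by nlinarith
    _ ≤ (p - 1) * (1 - c ^ 2) := by nlinarith




lemma hasDerivAt_G (t : ℝ) (hc : Real.cos t ≠ 0) :
    HasDerivAt (fun u => 1 - Real.cos u ^ p) (p * Real.cos t ^ (p-1) * Real.sin t) t := by
  have h := ((Real.hasDerivAt_cos t).rpow_const (p := p) (Or.inl hc)).const_sub 1
  refine h.congr_deriv ?_
  ring

lemma hasDerivAt_g (hp : 2 ≤ p) {t : ℝ} (ht : t ∈ Ioo 0 (π/2)) :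
    HasDerivAt (fun u => (1 - Real.cos u ^ p) ^ (1/p))
      (Real.cos t ^ (p-1) * Real.sin t * (1 - Real.cos t ^ p) ^ (1/p - 1)) t := by
  have hp0 : (0:ℝ) < p := by linarith
  have hc : 0 < Real.cos t := Real.cos_pos_of_mem_Ioo ⟨by linarith [ht.1, pi_pos], ht.2⟩
  have hc1 : Real.cos t < 1 := by
    have := Real.cos_lt_cos_of_nonneg_of_le_pi (le_refl 0) (by linarith [ht.2, pi_pos] : t ≤ π) ht.1
    simpa using this
  have hG : 0 < 1 - Real.cos t ^ p := by
    have := Real.rpow_lt_one hc.le hc1 hp0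
    linarith
  have h := (hasDerivAt_G t hc.ne').rpow_const (p := 1/p) (Or.inl hG.ne')
  convert h using 1
  field_simp

lemma basic_facts (hp : 2 ≤ p) {t : ℝ} (ht : t ∈ Ioo 0 (π/2)) :
    0 < Real.cos t ∧ Real.cos t < 1 ∧ 0 < Real.sin t ∧ 0 < 1 - Real.cos t ^ p := by
  have hp0 : (0:ℝ) < p := by linarith
  have hc : 0 < Real.cos t := Real.cos_pos_of_mem_Ioo ⟨by linarith [ht.1, pi_pos], ht.2⟩
  have hc1 : Real.cos t < 1 := by
    have := Real.cos_lt_cos_of_nonneg_of_le_pi (le_refl 0) (by linarith [ht.2, pi_pos] : t ≤ π) ht.1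
    simpa using this
  have hs : 0 < Real.sin t := Real.sin_pos_of_pos_of_lt_pi ht.1 (by linarith [ht.2, pi_pos])
  have hG : 0 < 1 - Real.cos t ^ p := by
    have := Real.rpow_lt_one hc.le hc1 hp0
    linarith
  exact ⟨hc, hc1, hs, hG⟩

lemma hasDerivAt_phi (hp : 2 ≤ p) {t : ℝ} (ht : t ∈ Ioo 0 (π/2)) :
    HasDerivAt (fun u => Real.cos u ^ (p-1) * Real.sin u * (1 - Real.cos u ^ p) ^ (1/p - 1))
      ((((p-1) * Real.cos t ^ (p-1-1) * (-Real.sin t)) * Real.sin t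
          + Real.cos t ^ (p-1) * Real.cos t) * (1 - Real.cos t ^ p) ^ (1/p - 1)
        + (Real.cos t ^ (p-1) * Real.sin t) *
          ((1/p - 1) * (1 - Real.cos t ^ p) ^ (1/p - 1 - 1)
            * (p * Real.cos t ^ (p-1) * Real.sin t))) t := by
  obtain ⟨hc, hc1, hs, hG⟩ := basic_facts hp ht
  have h1 : HasDerivAt (fun u => Real.cos u ^ (p-1))
      ((p-1) * Real.cos t ^ (p-1-1) * (-Real.sin t)) t :=
    by have := (Real.hasDerivAt_cos t).rpow_const (p := p-1) (Or.inl hc.ne'); convert this using 1; ring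
  have h3 : HasDerivAt (fun u => (1 - Real.cos u ^ p) ^ (1/p - 1))
      ((1/p - 1) * (1 - Real.cos t ^ p) ^ (1/p - 1 - 1)
        * (p * Real.cos t ^ (p-1) * Real.sin t)) t :=
    by have := (hasDerivAt_G t hc.ne').rpow_const (p := 1/p-1) (Or.inl hG.ne'); convert this using 1; ring
  exact (h1.mul (Real.hasDerivAt_sin t)).mul h3

lemma psi_nonpos (hp : 2 ≤ p) {t : ℝ} (ht : t ∈ Ioo 0 (π/2)) :
    ((((p-1) * Real.cos t ^ (p-1-1) * (-Real.sin t)) * Real.sin t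
          + Real.cos t ^ (p-1) * Real.cos t) * (1 - Real.cos t ^ p) ^ (1/p - 1)
        + (Real.cos t ^ (p-1) * Real.sin t) *
          ((1/p - 1) * (1 - Real.cos t ^ p) ^ (1/p - 1 - 1)
            * (p * Real.cos t ^ (p-1) * Real.sin t))) ≤ 0 := by
  obtain ⟨hc, hc1, hs, hG⟩ := basic_facts hp ht
  have hp0 : (0:ℝ) < p := by linarith
  set c := Real.cos t with hcdef
  set s := Real.sin t with hsdef
  have hs2 : s^2 = 1 - c^2 := Real.sin_sq t
  set G := 1 - c ^ p with hGdef
  set X := c ^ (p-2) with hXdef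
  set Y := G ^ (1/p - 2) with hYdef
  have e1 : c ^ (p-1) = X * c := by
    rw [hXdef, show p-1 = (p-2)+1 by ring, Real.rpow_add hc, Real.rpow_one]
  have e11 : c ^ (p-1-1) = X := by rw [hXdef, show p-1-1 = p-2 by ring]
  have e2 : c ^ p = X * c^2 := by
    rw [hXdef, show p = (p-2)+2 by ring, Real.rpow_add hc]
    norm_num
  have e3 : G ^ (1/p - 1) = Y * G := by
    rw [hYdef, show 1/p-1 = (1/p-2)+1 by ring, Real.rpow_add hG, Real.rpow_one]
  have e31 : G ^ (1/p - 1 - 1) = Y := by rw [hYdef, show 1/p-1-1 = 1/p-2 by ring]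
  have hX : 0 ≤ X := Real.rpow_nonneg hc.le _
  have hY : 0 ≤ Y := Real.rpow_nonneg hG.le _
  have key := key_poly hp hc.le hc1.le
  have hfact : (((p-1) * c ^ (p-1-1) * (-s)) * s + c ^ (p-1) * c) * G ^ (1/p - 1)
        + (c ^ (p-1) * s) * ((1/p - 1) * G ^ (1/p - 1 - 1) * (p * c ^ (p-1) * s))
      = X * Y * ((1 - c^p) * c^2 - (p-1) * (1 - c^2)) := by
    have hqp : (1/p) * p = 1 := by field_simp
    rw [e1, e11, e3, e31, hGdef, e2]
    linear_combination (-(X*Y*(p-1))) * hs2 + (X*X*Y*c^2*s^2) * hqp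
  rw [hfact]
  have : (1 - c^p) * c^2 - (p-1)*(1-c^2) ≤ 0 := by linarith
  nlinarith [mul_nonneg hX hY]



lemma g_concave (hp : 2 ≤ p) :
    ConcaveOn ℝ (Icc 0 (π/2)) (fun t => (1 - Real.cos t ^ p) ^ (1/p)) := by
  have hp0 : (0:ℝ) < p := by linarith
  set g : ℝ → ℝ := fun t => (1 - Real.cos t ^ p) ^ (1/p) with hg
  have hint : interior (Icc (0:ℝ) (π/2)) = Ioo 0 (π/2) := interior_Icc
  set φ : ℝ → ℝ := fun t => Real.cos t ^ (p-1) * Real.sin t * (1 - Real.cos t ^ p) ^ (1/p - 1)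
    with hφ
  have hderiv_eq : ∀ t ∈ Ioo (0:ℝ) (π/2), deriv g t = φ t := fun t ht =>
    (hasDerivAt_g hp ht).deriv
  have hcont : ContinuousOn g (Icc 0 (π/2)) := by
    apply Continuous.continuousOn
    apply Continuous.rpow_const
    · exact continuous_const.sub (Real.continuous_cos.rpow_const fun x => Or.inr hp0.le)
    · exact fun x => Or.inr (by positivity)
  apply concaveOn_of_deriv2_nonpos (convex_Icc _ _) hcont
  · rw [hint]
    exact fun t ht => ((hasDerivAt_g hp ht).differentiableAt).differentiableWithinAt
  · rw [hint]
    intro t ht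
    have heq : deriv g =ᶠ[nhds t] φ :=
      Filter.eventuallyEq_of_mem (isOpen_Ioo.mem_nhds ht) hderiv_eq
    exact ((hasDerivAt_phi hp ht).differentiableAt.congr_of_eventuallyEq heq).differentiableWithinAt
  · rw [hint]
    intro t ht
    have heq : deriv g =ᶠ[nhds t] φ :=
      Filter.eventuallyEq_of_mem (isOpen_Ioo.mem_nhds ht) hderiv_eq
    have : deriv (deriv g) t = deriv φ t := heq.deriv_eq
    show deriv (deriv g) t ≤ 0
    rw [this, (hasDerivAt_phi hp ht).deriv]
    exact psi_nonpos hp ht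

lemma g_zero (hp : 2 ≤ p) : (1 - Real.cos 0 ^ p) ^ (1/p) = 0 := by
  have hp0 : (0:ℝ) < p := by linarith
  rw [Real.cos_zero, Real.one_rpow, sub_self, Real.zero_rpow (by positivity : (0:ℝ) < 1/p).ne']

lemma g_subadd (hp : 2 ≤ p) {a b : ℝ} (ha : 0 ≤ a) (hb : 0 ≤ b) (hab : a + b ≤ π/2) :
    (1 - Real.cos (a+b) ^ p) ^ (1/p) ≤
      (1 - Real.cos a ^ p) ^ (1/p) + (1 - Real.cos b ^ p) ^ (1/p) := by
  rcases eq_or_lt_of_le (by linarith : (0:ℝ) ≤ a + b) with h0 | h0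
  · have ha0 : a = 0 := by linarith
    have hb0 : b = 0 := by linarith
    subst ha0; subst hb0
    norm_num
    positivity
  · have hconc := g_concave hp
    have hmem0 : (0:ℝ) ∈ Icc (0:ℝ) (π/2) := ⟨le_refl _, by positivity⟩
    have hmems : a + b ∈ Icc (0:ℝ) (π/2) := ⟨by linarith, hab⟩
    have h1 : (0:ℝ) ≤ a/(a+b) := by positivity
    have h2 : (0:ℝ) ≤ b/(a+b) := by positivity
    have h3 : a/(a+b) + b/(a+b) = 1 := by field_simp
    have h3' : b/(a+b) + a/(a+b) = 1 := by rw [add_comm]; exact h3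
    have hga := hconc.2 hmems hmem0 h1 h2 h3
    have hgb := hconc.2 hmems hmem0 h2 h1 h3'
    simp only [smul_eq_mul] at hga hgb
    rw [show a/(a+b)*(a+b) + b/(a+b)*0 = a from by field_simp; ring] at hga
    rw [show b/(a+b)*(a+b) + a/(a+b)*0 = b from by field_simp; ring] at hgb
    rw [g_zero hp] at hga hgb
    simp only [mul_zero, add_zero] at hga hgb
    calc (1 - Real.cos (a+b) ^ p) ^ (1/p)
        = (a/(a+b)) * (1 - Real.cos (a+b) ^ p) ^ (1/p)
          + (b/(a+b)) * (1 - Real.cos (a+b) ^ p) ^ (1/p) := by rw [← add_mul, h3, one_mul]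
      _ ≤ (1 - Real.cos a ^ p) ^ (1/p) + (1 - Real.cos b ^ p) ^ (1/p) := add_le_add hga hgb



lemma F_antitone (hp : 2 ≤ p) {c d : ℝ} (hc0 : 0 ≤ c) (hcd : c ≤ d) (hd1 : d ≤ 1) :
    (1 - d ^ p) ^ (1/p) ≤ (1 - c ^ p) ^ (1/p) := by
  have hp0 : (0:ℝ) < p := by linarith
  have h1 : c ^ p ≤ d ^ p := Real.rpow_le_rpow hc0 hcd hp0.le
  have h2 : d ^ p ≤ 1 := Real.rpow_le_one (by linarith) hd1 hp0.le
  exact Real.rpow_le_rpow (by linarith) (by linarith) (by positivity)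

lemma sin_le_g (hp : 2 ≤ p) {t : ℝ} (ht0 : 0 ≤ t) (ht1 : t ≤ π/2) :
    Real.sin t ≤ (1 - Real.cos t ^ p) ^ (1/p) := by
  have hp0 : (0:ℝ) < p := by linarith
  have hs0 : 0 ≤ Real.sin t := Real.sin_nonneg_of_nonneg_of_le_pi ht0 (by linarith [pi_pos])
  have hs1 : Real.sin t ≤ 1 := Real.sin_le_one t
  have hc0 : 0 ≤ Real.cos t := Real.cos_nonneg_of_mem_Icc ⟨by linarith [pi_pos], ht1⟩
  have hc1 : Real.cos t ≤ 1 := Real.cos_le_one t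
  have hcsq : Real.cos t ^ p ≤ Real.cos t ^ (2:ℝ) := by
    rcases eq_or_lt_of_le hc0 with h | h
    · rw [← h, Real.zero_rpow hp0.ne', Real.zero_rpow (by norm_num : (2:ℝ) ≠ 0)]
    · exact Real.rpow_le_rpow_of_exponent_ge h hc1 hp
  have hsin2 : Real.sin t ^ (2:ℝ) ≤ 1 - Real.cos t ^ p := by
    have hcos2 : Real.cos t ^ (2:ℝ) = Real.cos t ^ (2:ℕ) := by
      rw [← Real.rpow_natCast (Real.cos t) 2]; norm_num
    have hsin2' : Real.sin t ^ (2:ℝ) = Real.sin t ^ (2:ℕ) := by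
      rw [← Real.rpow_natCast (Real.sin t) 2]; norm_num
    have := Real.sin_sq_add_cos_sq t
    rw [hsin2']
    rw [hcos2] at hcsq
    nlinarith
  calc Real.sin t = Real.sin t ^ (1:ℝ) := (Real.rpow_one _).symm
    _ ≤ Real.sin t ^ ((2:ℝ) * (1/p)) := by
        rcases eq_or_lt_of_le hs0 with h | h
        · rw [← h, Real.zero_rpow (by norm_num : (1:ℝ) ≠ 0),
            Real.zero_rpow (by positivity : (2:ℝ) * (1/p) ≠ 0)]
        · exact Real.rpow_le_rpow_of_exponent_ge h hs1
            (by rw [mul_one_div]; rw [div_le_one hp0]; linarith)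
    _ = (Real.sin t ^ (2:ℝ)) ^ (1/p) := by rw [← Real.rpow_mul hs0]
    _ ≤ (1 - Real.cos t ^ p) ^ (1/p) := Real.rpow_le_rpow (by positivity) hsin2 (by positivity)

lemma partB (hp : 2 ≤ p) {A B c : ℝ} (hA0 : 0 ≤ A) (hA1 : A ≤ 1) (hB0 : 0 ≤ B) (hB1 : B ≤ 1)
    (hc0 : 0 ≤ c) (hc1 : c ≤ 1)
    (hkey : A * B - Real.sqrt (1 - A^2) * Real.sqrt (1 - B^2) ≤ c) :
    (1 - c ^ p) ^ (1/p) ≤ (1 - A ^ p) ^ (1/p) + (1 - B ^ p) ^ (1/p) := by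
  have hp0 : (0:ℝ) < p := by linarith
  set α := Real.arccos A with hα
  set β := Real.arccos B with hβ
  have hcosα : Real.cos α = A := Real.cos_arccos (by linarith) hA1
  have hcosβ : Real.cos β = B := Real.cos_arccos (by linarith) hB1
  have hα0 : 0 ≤ α := Real.arccos_nonneg A
  have hβ0 : 0 ≤ β := Real.arccos_nonneg B
  have hα2 : α ≤ π/2 := Real.arccos_le_pi_div_two.2 hA0
  have hβ2 : β ≤ π/2 := Real.arccos_le_pi_div_two.2 hB0
  by_cases hsum : α + β ≤ π/2
  · have hcos : Real.cos (α + β) = A * B - Real.sqrt (1 - A^2) * Real.sqrt (1 - B^2) := by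
      rw [Real.cos_add, hcosα, hcosβ, hα, hβ, Real.sin_arccos, Real.sin_arccos]
    have h1 := g_subadd hp hα0 hβ0 hsum
    rw [hcos, hcosα, hcosβ] at h1
    refine le_trans ?_ h1
    apply F_antitone hp ?_ hkey hc1
    rw [← hcos]
    exact Real.cos_nonneg_of_mem_Icc ⟨by linarith [pi_pos], hsum⟩
  · push_neg at hsum
    have hLHS : (1 - c ^ p) ^ (1/p) ≤ 1 := by
      have hcp1 : c ^ p ≤ 1 := Real.rpow_le_one hc0 hc1 hp0.le
      have hcp0 : 0 ≤ c ^ p := Real.rpow_nonneg hc0 p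
      exact Real.rpow_le_one (by linarith) (by linarith) (by positivity)
    refine le_trans hLHS ?_
    have hsinα : Real.cos β ≤ Real.sin α := by
      rw [← Real.sin_pi_div_two_sub]
      apply Real.sin_le_sin_of_le_of_le_pi_div_two (by linarith [pi_pos]) hα2 (by linarith)
    have hsc : 1 ≤ Real.sin β + Real.cos β := by
      nlinarith [Real.sin_sq_add_cos_sq β, Real.sin_nonneg_of_nonneg_of_le_pi hβ0 (by linarith [pi_pos]), Real.cos_nonneg_of_mem_Icc ⟨by linarith [pi_pos], hβ2⟩]
    have h1 := sin_le_g hp hα0 hα2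
    have h2 := sin_le_g hp hβ0 hβ2
    rw [hcosα] at h1
    rw [hcosβ] at h2
    linarith


lemma inner_key {H : Type*} [NormedAddCommGroup H] [InnerProductSpace ℂ H]
    (x y z : H) (hx : ‖x‖ = 1) (hy : ‖y‖ = 1) (hz : ‖z‖ = 1) :
    ‖⟪x, z⟫‖ * ‖⟪y, z⟫‖ -
      Real.sqrt (1 - ‖⟪x, z⟫‖ ^ 2) * Real.sqrt (1 - ‖⟪y, z⟫‖ ^ 2)
      ≤ ‖⟪x, y⟫‖ := by
  set a : ℂ := ⟪z, x⟫ with ha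
  set b : ℂ := ⟪z, y⟫ with hb
  set u : H := x - a • z with hu
  set v : H := y - b • z with hv
  have hzz : ⟪z, z⟫ = 1 := by
    rw [inner_self_eq_norm_sq_to_K, hz]; norm_num
  have hxx : ⟪x, x⟫ = 1 := by
    rw [inner_self_eq_norm_sq_to_K, hx]; norm_num
  have hyy : ⟪y, y⟫ = 1 := by
    rw [inner_self_eq_norm_sq_to_K, hy]; norm_num
  have hxza : ⟪x, z⟫ = conj a := by rw [ha, inner_conj_symm]
  have hyzb : ⟪y, z⟫ = conj b := by rw [hb, inner_conj_symm]
  have hzu : ⟪z, u⟫ = 0 := by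
    rw [hu, inner_sub_right, inner_smul_right, hzz]; ring
  have hzv : ⟪z, v⟫ = 0 := by
    rw [hv, inner_sub_right, inner_smul_right, hzz]; ring
  have huz : ⟪u, z⟫ = 0 := by
    rw [← inner_conj_symm, hzu]; simp
  have hvz : ⟪v, z⟫ = 0 := by
    rw [← inner_conj_symm, hzv]; simp
  have hxdecomp : x = a • z + u := by rw [hu]; abel
  have hydecomp : y = b • z + v := by rw [hv]; abel
  have hxy : ⟪x, y⟫ = conj a * b + ⟪u, v⟫ := by
    conv_lhs => rw [hxdecomp, hydecomp]
    simp only [inner_add_left, inner_add_right, inner_smul_left, inner_smul_right,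
      hzz, hzv, huz]
    ring
  have huu : (‖u‖ : ℝ) ^ 2 = 1 - ‖a‖ ^ 2 := by
    have h1 : ⟪u, u⟫ = 1 - a * conj a := by
      rw [hu]
      simp only [inner_sub_left, inner_sub_right, inner_smul_left, inner_smul_right,
        hxx, hzz, hxza, ha]
      ring
    rw [Complex.mul_conj] at h1
    rw [inner_self_eq_norm_sq_to_K] at h1
    rw [Complex.sq_norm]
    have h2 : ((‖u‖^2 : ℝ) : ℂ) = ((1 - Complex.normSq a : ℝ) : ℂ) := by push_cast; exact h1
    exact Complex.ofReal_inj.mp h2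
  have hvv : (‖v‖ : ℝ) ^ 2 = 1 - ‖b‖ ^ 2 := by
    have h1 : ⟪v, v⟫ = 1 - b * conj b := by
      rw [hv]
      simp only [inner_sub_left, inner_sub_right, inner_smul_left, inner_smul_right,
        hyy, hzz, hyzb, hb]
      ring
    rw [Complex.mul_conj] at h1
    rw [inner_self_eq_norm_sq_to_K] at h1
    rw [Complex.sq_norm]
    have h2 : ((‖v‖^2 : ℝ) : ℂ) = ((1 - Complex.normSq b : ℝ) : ℂ) := by push_cast; exact h1
    exact Complex.ofReal_inj.mp h2
  have hnu : Real.sqrt (1 - ‖a‖ ^ 2) = ‖u‖ := by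
    rw [← huu, Real.sqrt_sq (norm_nonneg u)]
  have hnv : Real.sqrt (1 - ‖b‖ ^ 2) = ‖v‖ := by
    rw [← hvv, Real.sqrt_sq (norm_nonneg v)]
  have habs : ‖⟪x, z⟫‖ = ‖a‖ := by rw [hxza, Complex.norm_conj]
  have habs' : ‖⟪y, z⟫‖ = ‖b‖ := by rw [hyzb, Complex.norm_conj]
  rw [habs, habs', hnu, hnv]
  have hinner_uv : ‖⟪u, v⟫‖ ≤ ‖u‖ * ‖v‖ := by
    exact norm_inner_le_norm u v
  have htri : ‖(conj a * b)‖ - ‖⟪u, v⟫‖ ≤ ‖⟪x, y⟫‖ := by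
    rw [hxy]
    have h2 := norm_sub_le ((conj a * b + ⟪u, v⟫)) ⟪u, v⟫
    rw [add_sub_cancel_right] at h2
    linarith
  have hmul : ‖(conj a * b)‖ = ‖a‖ * ‖b‖ := by
    rw [norm_mul, Complex.norm_conj]
  linarith [htri, hinner_uv, hmul.symm.le]


theorem lin_p_triangle {H : Type*} [NormedAddCommGroup H] [InnerProductSpace ℂ H]
    (x y z : H) (hx : x ≠ 0) (hy : y ≠ 0) (hz : z ≠ 0) (p : ℝ) (hp : 2 ≤ p) :
    (1 - ‖⟪x, y⟫‖ ^ p / (‖x‖ ^ p * ‖y‖ ^ p)) ^ (1 / p) ≤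
      (1 - ‖⟪x, z⟫‖ ^ p / (‖x‖ ^ p * ‖z‖ ^ p)) ^ (1 / p) +
        (1 - ‖⟪y, z⟫‖ ^ p / (‖y‖ ^ p * ‖z‖ ^ p)) ^ (1 / p) := by
  have hp0 : (0:ℝ) < p := by linarith
  have hxn : (0:ℝ) < ‖x‖ := norm_pos_iff.2 hx
  have hyn : (0:ℝ) < ‖y‖ := norm_pos_iff.2 hy
  have hzn : (0:ℝ) < ‖z‖ := norm_pos_iff.2 hz
  set x' : H := ((‖x‖ : ℂ))⁻¹ • x with hx'def
  set y' : H := ((‖y‖ : ℂ))⁻¹ • y with hy'def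
  set z' : H := ((‖z‖ : ℂ))⁻¹ • z with hz'def
  have hx1 : ‖x'‖ = 1 := by
    rw [hx'def, norm_smul, norm_inv, Complex.norm_real, Real.norm_eq_abs,
      abs_of_pos hxn, inv_mul_cancel₀ hxn.ne']
  have hy1 : ‖y'‖ = 1 := by
    rw [hy'def, norm_smul, norm_inv, Complex.norm_real, Real.norm_eq_abs,
      abs_of_pos hyn, inv_mul_cancel₀ hyn.ne']
  have hz1 : ‖z'‖ = 1 := by
    rw [hz'def, norm_smul, norm_inv, Complex.norm_real, Real.norm_eq_abs,
      abs_of_pos hzn, inv_mul_cancel₀ hzn.ne']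
  have hscale : ∀ (u v : H), 0 < ‖u‖ → 0 < ‖v‖ →
      ‖⟪((‖u‖ : ℂ))⁻¹ • u, ((‖v‖ : ℂ))⁻¹ • v⟫‖
        = ‖⟪u, v⟫‖ / (‖u‖ * ‖v‖) := by
    intro u v hu hv
    rw [inner_smul_left, inner_smul_right, norm_mul, norm_mul, Complex.norm_conj,
      norm_inv, norm_inv, Complex.norm_real, Complex.norm_real, Real.norm_eq_abs,
      Real.norm_eq_abs, abs_of_pos hu, abs_of_pos hv]
    field_simp
  have hAxy : ‖⟪x', y'⟫‖ = ‖⟪x, y⟫‖ / (‖x‖ * ‖y‖) := hscale x y hxn hyn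
  have hAxz : ‖⟪x', z'⟫‖ = ‖⟪x, z⟫‖ / (‖x‖ * ‖z‖) := hscale x z hxn hzn
  have hAyz : ‖⟪y', z'⟫‖ = ‖⟪y, z⟫‖ / (‖y‖ * ‖z‖) := hscale y z hyn hzn
  have hpow : ∀ (u v : H) (u' v' : H), 0 < ‖u‖ → 0 < ‖v‖ →
      ‖⟪u', v'⟫‖ = ‖⟪u, v⟫‖ / (‖u‖ * ‖v‖) →
      ‖⟪u', v'⟫‖ ^ p = ‖⟪u, v⟫‖ ^ p / (‖u‖ ^ p * ‖v‖ ^ p) := by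
    intro u v u' v' hu hv h
    rw [h, Real.div_rpow (by positivity) (by positivity),
      Real.mul_rpow hu.le hv.le]
  have exy := hpow x y x' y' hxn hyn hAxy
  have exz := hpow x z x' z' hxn hzn hAxz
  have eyz := hpow y z y' z' hyn hzn hAyz
  rw [← exy, ← exz, ← eyz]
  have hb : ∀ (u v : H), ‖u‖ = 1 → ‖v‖ = 1 → ‖⟪u, v⟫‖ ≤ 1 := by
    intro u v hu hv
    have := norm_inner_le_norm (𝕜 := ℂ) u v
    rw [hu, hv] at this
    simpa using this
  exact partB hp (norm_nonneg _) (hb x' z' hx1 hz1) (norm_nonneg _)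
    (hb y' z' hy1 hz1) (norm_nonneg _) (hb x' y' hx1 hy1)
    (inner_key x' y' z' hx1 hy1 hz1)
end

section
/- For any nonzero vectors x, y, z in a complex inner product space and real p ≥ 2, (1 − |Re⟨x,y⟩|^p/(‖x‖^p‖y‖^p))^{1/p} ≤ (1 − |Re⟨x,z⟩|^p/(‖x‖^p‖z‖^p))^{1/p} + (1 − |Re⟨y,z⟩|^p/(‖y‖^p‖z‖^p))^{1/p}. -/
open scoped ComplexConjugate
local notation "⟪" x ", " y "⟫" => @inner ℂ _ _ x y

open Real Set in
section
lemma rpow_le_self_of_le_one' {x z : ℝ} (hx0 : 0 ≤ x) (hx1 : x ≤ 1) (hz : 1 ≤ z) : x ^ z ≤ x := by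
  rcases eq_or_lt_of_le hx0 with h | h
  · rw [← h, Real.zero_rpow (by linarith)]
  · calc x ^ z ≤ x ^ (1:ℝ) := Real.rpow_le_rpow_of_exponent_ge h hx1 hz
    _ = x := Real.rpow_one x

lemma gap {q t x y : ℝ} (hq : 1 ≤ q) (ht : 0 ≤ t) (hx : 0 ≤ x) (hxy : x ≤ y) :
    (x + t) ^ q - x ^ q ≤ (y + t) ^ q - y ^ q := by
  have hcv := convexOn_rpow hq
  rcases eq_or_lt_of_le hxy with rfl | hxy'
  · exact le_refl _
  rcases eq_or_lt_of_le ht with rfl | ht'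
  · simp
  have hy : (0:ℝ) ≤ y := le_trans hx hxy
  have hmem1 : x ∈ Ici (0:ℝ) := hx
  have hmem2 : (x + t) ∈ Ici (0:ℝ) := by simp only [mem_Ici]; linarith
  have hmem3 : y ∈ Ici (0:ℝ) := hy
  have hmem4 : (y + t) ∈ Ici (0:ℝ) := by simp only [mem_Ici]; linarith
  -- slope from x: (f(x+t)-f x)/t ≤ (f(y+t)-f x)/(y+t-x)
  have h1 := hcv.secant_mono hmem1 hmem2 hmem4 (by intro h; nlinarith) (by intro h; nlinarith)
    (by linarith)
  -- slope from y+t: (f x - f (y+t))/(x-(y+t)) ≤ (f y - f (y+t))/(y - (y+t))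
  have h2 := hcv.secant_mono hmem4 hmem1 hmem3 (by intro h; nlinarith) (by intro h; nlinarith)
    (by linarith)
  rw [div_le_div_iff₀ (by linarith) (by linarith)] at h1
  rw [show x - (y+t) = -((y+t)-x) by ring, show y - (y+t) = -t by ring, div_neg, div_neg,
    neg_le_neg_iff, div_le_div_iff₀ (by linarith : (0:ℝ) < t) (by linarith : (0:ℝ) < y + t - x)] at h2
  nlinarith [h1, h2]

lemma Gmono {q w₁ w₂ : ℝ} (hq : 1 ≤ q) (h1 : 0 ≤ w₁) (h12 : w₁ ≤ w₂) (h2 : w₂ ≤ 1) :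
    w₁ ^ q * (1 - (1 - w₂) ^ q) ≤ w₂ ^ q * (1 - (1 - w₁) ^ q) := by
  have key := gap hq (mul_nonneg h1 (by linarith)) (mul_nonneg h1 (by linarith) : 0 ≤ w₁ * (1 - w₂))
    (by nlinarith : w₁ * (1 - w₂) ≤ w₂ * (1 - w₁))
  rw [show w₁ * (1 - w₂) + w₁ * w₂ = w₁ by ring, show w₂ * (1 - w₁) + w₁ * w₂ = w₂ by ring] at key
  rw [Real.mul_rpow h1 (by linarith), Real.mul_rpow (by linarith : (0:ℝ) ≤ w₂) (by linarith)] at key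
  nlinarith [key]

-- helper: (B^2)^(p/2) = B^p
lemma sq_rpow_half {B : ℝ} (p : ℝ) (hB : 0 ≤ B) : ((B ^ 2 : ℝ)) ^ (p / 2) = B ^ p := by
  rw [← Real.rpow_natCast B 2, ← Real.rpow_mul hB]
  norm_num
  congr 1
  ring

lemma subadd {p B C : ℝ} (hp : 2 ≤ p) (hB : 0 ≤ B) (hC : 0 ≤ C) (hBC : B + C ≤ 1) :
    (1 - (1 - (B + C) ^ 2) ^ (p / 2)) ^ (1 / p) ≤
      (1 - (1 - B ^ 2) ^ (p / 2)) ^ (1 / p) + (1 - (1 - C ^ 2) ^ (p / 2)) ^ (1 / p) := by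
  have hp0 : 0 < p := by linarith
  have hq : (1:ℝ) ≤ p / 2 := by linarith
  -- nonnegativity of 1 - (1-w)^(p/2) terms
  have hnn : ∀ w : ℝ, 0 ≤ w → w ≤ 1 → 0 ≤ 1 - (1 - w) ^ (p / 2) := fun w hw hw1 => by
    have := Real.rpow_le_one (by linarith : (0:ℝ) ≤ 1 - w) (by linarith) (by linarith : (0:ℝ) ≤ p/2)
    linarith
  rcases eq_or_lt_of_le hB with rfl | hB'
  · simp only [ne_eq, zero_pow, OfNat.ofNat_ne_zero, not_false_eq_true, sub_zero, zero_add,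
      Real.one_rpow, sub_self]
    have : (0:ℝ) ≤ (0:ℝ) ^ ((1:ℝ)/p) := Real.rpow_nonneg le_rfl _
    linarith
  rcases eq_or_lt_of_le hC with rfl | hC'
  · simp only [ne_eq, zero_pow, OfNat.ofNat_ne_zero, not_false_eq_true, sub_zero, add_zero,
      Real.one_rpow, sub_self]
    have : (0:ℝ) ≤ (0:ℝ) ^ ((1:ℝ)/p) := Real.rpow_nonneg le_rfl _
    linarith
  set s := B + C with hs
  have hs0 : 0 < s := by positivity
  have hs1 : s ≤ 1 := hBC
  set Gs := (1 - (1 - s ^ 2) ^ (p / 2)) / s ^ p with hGs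
  have hsp : (0:ℝ) < s ^ p := Real.rpow_pos_of_pos hs0 p
  have hGs0 : 0 ≤ Gs := div_nonneg (hnn _ (by positivity) (by nlinarith)) hsp.le
  have hkey : s ^ p * Gs = 1 - (1 - s ^ 2) ^ (p / 2) := by
    rw [hGs, mul_div_assoc', mul_div_cancel_left₀ _ hsp.ne']
  -- bound each RHS term from below
  have hterm : ∀ D : ℝ, 0 ≤ D → D ≤ s → D * Gs ^ (1 / p) ≤ (1 - (1 - D ^ 2) ^ (p / 2)) ^ (1 / p) := by
    intro D hD hDs
    have hm := Gmono hq (by positivity : (0:ℝ) ≤ D ^ 2) (by nlinarith : D ^ 2 ≤ s ^ 2)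
      (by nlinarith : s ^ 2 ≤ 1)
    rw [sq_rpow_half p hD, sq_rpow_half p hs0.le] at hm
    -- hm : D^p * (1 - (1-s²)^(p/2)) ≤ s^p * (1 - (1-D²)^(p/2))
    have hDG : D ^ p * Gs ≤ 1 - (1 - D ^ 2) ^ (p / 2) := by
      rw [← hkey] at hm
      have := (mul_le_mul_iff_right₀ hsp).mp (by nlinarith [hm] : s ^ p * (D ^ p * Gs) ≤ s ^ p * (1 - (1 - D ^ 2) ^ (p / 2)))
      exact this
    calc D * Gs ^ (1 / p) = (D ^ p * Gs) ^ (1 / p) := by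
          rw [Real.mul_rpow (by positivity) hGs0, one_div, Real.rpow_rpow_inv hD hp0.ne']
      _ ≤ (1 - (1 - D ^ 2) ^ (p / 2)) ^ (1 / p) :=
          Real.rpow_le_rpow (by positivity) hDG (by positivity)
  have hL : (1 - (1 - s ^ 2) ^ (p / 2)) ^ (1 / p) = B * Gs ^ (1 / p) + C * Gs ^ (1 / p) := by
    rw [← hkey, Real.mul_rpow hsp.le hGs0, one_div, Real.rpow_rpow_inv hs0.le hp0.ne']
    ring
  rw [hL]
  exact add_le_add (hterm B hB (by linarith)) (hterm C hC (by linarith))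

lemma sine_num {α β γ B C : ℝ} (hα0 : 0 ≤ α) (hβ0 : 0 ≤ β) (hγ0 : 0 ≤ γ)
    (hβ1 : β ≤ 1) (hγ1 : γ ≤ 1) (hB0 : 0 ≤ B) (hC0 : 0 ≤ C)
    (hβB : β ^ 2 = 1 - B ^ 2) (hγC : γ ^ 2 = 1 - C ^ 2)
    (hlt : B + C < 1) (hle : β * γ - B * C ≤ α) : 1 - α ^ 2 ≤ (B + C) ^ 2 := by
  have key : (β * γ) ^ 2 - (B * C) ^ 2 = 1 - B ^ 2 - C ^ 2 := by
    rw [mul_pow, mul_pow, hβB, hγC]; ring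
  have pos : 2 * (B * C) ≤ 1 - B ^ 2 - C ^ 2 := by nlinarith [mul_nonneg hB0 hC0]
  have h0 : 0 ≤ β * γ - B * C := by
    nlinarith [key, pos, mul_nonneg hB0 hC0, mul_nonneg hβ0 hγ0]
  have hsq : (β * γ - B * C) ^ 2 ≤ α ^ 2 := pow_le_pow_left₀ h0 hle 2
  have m1 : β * C ≤ C := mul_le_of_le_one_left hC0 hβ1
  have m2 : B * γ ≤ B := mul_le_of_le_one_right hB0 hγ1
  have n1 : 0 ≤ β * C := mul_nonneg hβ0 hC0
  have n2 : 0 ≤ B * γ := mul_nonneg hB0 hγ0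
  have p1 : (β * C + B * γ) ^ 2 ≤ (B + C) ^ 2 := pow_le_pow_left₀ (by linarith) (by linarith) 2
  have p2 : 1 - (β * γ - B * C) ^ 2 = (β * C + B * γ) ^ 2 := by
    linear_combination (-(γ ^ 2 + C ^ 2)) * hβB - hγC
  linarith [hsq, p2, p1]

lemma sine_triangle {E : Type*} [NormedAddCommGroup E] [InnerProductSpace ℝ E]
    (u v w : E) (hu : ‖u‖ = 1) (hv : ‖v‖ = 1) (hw : ‖w‖ = 1) :
    Real.sqrt (1 - (inner ℝ u v : ℝ) ^ 2) ≤
      Real.sqrt (1 - (inner ℝ u w : ℝ) ^ 2) + Real.sqrt (1 - (inner ℝ v w : ℝ) ^ 2) := by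
  set a : ℝ := inner ℝ u v with ha
  set b : ℝ := inner ℝ u w with hb
  set c : ℝ := inner ℝ v w with hc
  have hb1 : |b| ≤ 1 := by
    have := abs_real_inner_le_norm u w; rw [hu, hw] at this; simpa using this
  have hc1 : |c| ≤ 1 := by
    have := abs_real_inner_le_norm v w; rw [hv, hw] at this; simpa using this
  have hww : (inner ℝ w w : ℝ) = 1 := by
    rw [real_inner_self_eq_norm_sq, hw]; norm_num
  have hwv : (inner ℝ w v : ℝ) = c := by rw [hc]; exact real_inner_comm v w
  have hinner : (inner ℝ (u - b • w) (v - c • w) : ℝ) = a - b * c := by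
    simp only [inner_sub_left, inner_sub_right, real_inner_smul_left, real_inner_smul_right,
      hww, hwv, ← ha, ← hb, ← hc]
    ring
  have hnu : ‖u - b • w‖ ^ 2 = 1 - b ^ 2 := by
    rw [norm_sub_sq_real, real_inner_smul_right, norm_smul, hu, hw, ← hb]
    simp [mul_pow, sq_abs]
    ring
  have hnv : ‖v - c • w‖ ^ 2 = 1 - c ^ 2 := by
    rw [norm_sub_sq_real, real_inner_smul_right, norm_smul, hv, hw, ← hc]
    simp [mul_pow, sq_abs]
    ring
  set B := Real.sqrt (1 - b ^ 2) with hB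
  set C := Real.sqrt (1 - c ^ 2) with hC
  have hB0 : 0 ≤ B := Real.sqrt_nonneg _
  have hC0 : 0 ≤ C := Real.sqrt_nonneg _
  have hBsq : B ^ 2 = 1 - b ^ 2 := Real.sq_sqrt (by nlinarith [sq_abs b])
  have hCsq : C ^ 2 = 1 - c ^ 2 := Real.sq_sqrt (by nlinarith [sq_abs c])
  have hBu : B = ‖u - b • w‖ := by rw [hB, ← hnu, Real.sqrt_sq (norm_nonneg _)]
  have hCv : C = ‖v - c • w‖ := by rw [hC, ← hnv, Real.sqrt_sq (norm_nonneg _)]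
  have hcs : |a - b * c| ≤ B * C := by
    rw [hBu, hCv, ← hinner]; exact abs_real_inner_le_norm _ _
  rcases le_or_gt 1 (B + C) with hcase | hcase
  · calc Real.sqrt (1 - a ^ 2) ≤ Real.sqrt 1 :=
          Real.sqrt_le_sqrt (by nlinarith [sq_nonneg a])
      _ = 1 := Real.sqrt_one
      _ ≤ B + C := hcase
  · have hα : |b| * |c| - B * C ≤ |a| := by
      have h1 : |b * c| - |a| ≤ |b * c - a| := abs_sub_abs_le_abs_sub _ _
      rw [abs_sub_comm] at h1
      have h2 : |b| * |c| = |b * c| := (abs_mul b c).symm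
      linarith [hcs, h1, h2.le, h2.ge]
    have hfin : 1 - a ^ 2 ≤ (B + C) ^ 2 := by
      have := sine_num (abs_nonneg a) (abs_nonneg b) (abs_nonneg c) hb1 hc1 hB0 hC0
        (by rw [sq_abs]; linarith [hBsq]) (by rw [sq_abs]; linarith [hCsq]) hcase hα
      rw [sq_abs] at this
      exact this
    calc Real.sqrt (1 - a ^ 2) ≤ Real.sqrt ((B + C) ^ 2) := Real.sqrt_le_sqrt hfin
      _ = B + C := Real.sqrt_sq (by linarith)

lemma rpow_le_sq {x p : ℝ} (hx0 : 0 ≤ x) (hx1 : x ≤ 1) (hp : 2 ≤ p) : x ^ p ≤ x ^ 2 := by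
  rcases eq_or_lt_of_le hx0 with h | h
  · rw [← h, Real.zero_rpow (by linarith)]; positivity
  · calc x ^ p ≤ x ^ (2:ℝ) := Real.rpow_le_rpow_of_exponent_ge h hx1 hp
      _ = x ^ 2 := by rw [← Real.rpow_natCast x 2]; norm_num

lemma combine {p a b c : ℝ} (hp : 2 ≤ p) (ha0 : 0 ≤ a) (ha1 : a ≤ 1)
    (hb0 : 0 ≤ b) (hb1 : b ≤ 1) (hc0 : 0 ≤ c) (hc1 : c ≤ 1)
    (htri : Real.sqrt (1 - a ^ 2) ≤ Real.sqrt (1 - b ^ 2) + Real.sqrt (1 - c ^ 2)) :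
    (1 - a ^ p) ^ (1 / p) ≤ (1 - b ^ p) ^ (1 / p) + (1 - c ^ p) ^ (1 / p) := by
  have hp0 : (0:ℝ) < p := by linarith
  set A := Real.sqrt (1 - a ^ 2) with hA
  set B := Real.sqrt (1 - b ^ 2) with hB
  set C := Real.sqrt (1 - c ^ 2) with hC
  have hA0 : 0 ≤ A := Real.sqrt_nonneg _
  have hB0 : 0 ≤ B := Real.sqrt_nonneg _
  have hC0 : 0 ≤ C := Real.sqrt_nonneg _
  have hAsq : A ^ 2 = 1 - a ^ 2 := Real.sq_sqrt (by nlinarith)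
  have hBsq : B ^ 2 = 1 - b ^ 2 := Real.sq_sqrt (by nlinarith)
  have hCsq : C ^ 2 = 1 - c ^ 2 := Real.sq_sqrt (by nlinarith)
  -- rewrite 1 - t^p as 1 - (1 - T^2)^(p/2)
  have conv : ∀ t T : ℝ, 0 ≤ t → T ^ 2 = 1 - t ^ 2 → 1 - t ^ p = 1 - (1 - T ^ 2) ^ (p / 2) := by
    intro t T ht hT
    rw [hT, show 1 - (1 - t ^ 2) = t ^ 2 by ring, sq_rpow_half p ht]
  -- each (1 - t^p)^(1/p) is ≥ T
  have glow : ∀ t T : ℝ, 0 ≤ t → t ≤ 1 → 0 ≤ T → T ^ 2 = 1 - t ^ 2 →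
      T ≤ (1 - t ^ p) ^ (1 / p) := by
    intro t T ht ht1 hT0 hT
    have h1 : T ^ p ≤ 1 - t ^ p := by
      have e1 : T ^ p = (1 - t ^ 2) ^ (p / 2) := by rw [← hT, sq_rpow_half p hT0]
      have e2 : (1 - t ^ 2) ^ (p / 2) ≤ 1 - t ^ 2 :=
        rpow_le_self_of_le_one' (by nlinarith) (by nlinarith) (by linarith)
      have e3 : t ^ p ≤ t ^ 2 := rpow_le_sq ht ht1 hp
      rw [e1]; linarith
    calc T = (T ^ p) ^ (1 / p) := by
          rw [one_div, Real.rpow_rpow_inv hT0 hp0.ne']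
      _ ≤ (1 - t ^ p) ^ (1 / p) := Real.rpow_le_rpow (by positivity) h1 (by positivity)
  have hgb := glow b B hb0 hb1 hB0 hBsq
  have hgc := glow c C hc0 hc1 hC0 hCsq
  rcases le_or_gt 1 (B + C) with hcase | hcase
  · have hup : (1 - a ^ p) ^ (1 / p) ≤ 1 := by
      apply Real.rpow_le_one _ _ (by positivity)
      · have : a ^ p ≤ 1 := Real.rpow_le_one ha0 ha1 hp0.le
        linarith
      · have : (0:ℝ) ≤ a ^ p := Real.rpow_nonneg ha0 p
        linarith
    linarith
  · have step1 : (1 - a ^ p) ^ (1 / p) ≤ (1 - (1 - (B + C) ^ 2) ^ (p / 2)) ^ (1 / p) := by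
      rw [conv a A ha0 hAsq]
      apply Real.rpow_le_rpow _ _ (by positivity)
      · have h1 : (1 - A ^ 2) ^ (p/2) ≤ 1 :=
          Real.rpow_le_one (by nlinarith [sq_nonneg a]) (by nlinarith [sq_nonneg a]) (by linarith)
        linarith
      · have hA2 : A ^ 2 ≤ (B + C) ^ 2 := pow_le_pow_left₀ hA0 htri 2
        have hmono : (1 - (B + C) ^ 2) ^ (p/2) ≤ (1 - A ^ 2) ^ (p/2) :=
          Real.rpow_le_rpow (by nlinarith) (by linarith) (by linarith)
        linarith
    have step2 := subadd hp hB0 hC0 hcase.le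
    rw [← conv b B hb0 hBsq, ← conv c C hc0 hCsq] at step2
    linarith

theorem lin_p_triangle_re {H : Type*} [NormedAddCommGroup H] [InnerProductSpace ℂ H]
    (x y z : H) (hx : x ≠ 0) (hy : y ≠ 0) (hz : z ≠ 0) (p : ℝ) (hp : 2 ≤ p) :
    (1 - |(⟪x, y⟫).re| ^ p / (‖x‖ ^ p * ‖y‖ ^ p)) ^ (1 / p) ≤
      (1 - |(⟪x, z⟫).re| ^ p / (‖x‖ ^ p * ‖z‖ ^ p)) ^ (1 / p) +
        (1 - |(⟪y, z⟫).re| ^ p / (‖y‖ ^ p * ‖z‖ ^ p)) ^ (1 / p) := by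
  letI : InnerProductSpace ℝ H := InnerProductSpace.complexToReal
  set u : H := ‖x‖⁻¹ • x with hu'
  set v : H := ‖y‖⁻¹ • y with hv'
  set w : H := ‖z‖⁻¹ • z with hw'
  have hu : ‖u‖ = 1 := norm_smul_inv_norm hx
  have hv : ‖v‖ = 1 := norm_smul_inv_norm hy
  have hw : ‖w‖ = 1 := norm_smul_inv_norm hz
  have hre : ∀ s t : H, (inner ℝ s t : ℝ) = (⟪s, t⟫).re := fun s t => rfl
  -- key rewriting: |re ⟪s,t⟫|^p / (‖s‖^p ‖t‖^p) = |inner (unit s) (unit t)|^p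
  have key : ∀ s t : H, s ≠ 0 → t ≠ 0 →
      |(⟪s, t⟫).re| ^ p / (‖s‖ ^ p * ‖t‖ ^ p) =
        |(inner ℝ (‖s‖⁻¹ • s) (‖t‖⁻¹ • t) : ℝ)| ^ p := by
    intro s t hs ht
    have hns : (0:ℝ) < ‖s‖ := norm_pos_iff.mpr hs
    have hnt : (0:ℝ) < ‖t‖ := norm_pos_iff.mpr ht
    have h1 : (inner ℝ (‖s‖⁻¹ • s) (‖t‖⁻¹ • t) : ℝ) = ‖s‖⁻¹ * (‖t‖⁻¹ * (inner ℝ s t : ℝ)) := by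
      rw [real_inner_smul_left, real_inner_smul_right]
    rw [h1, hre, abs_mul, abs_mul, abs_of_pos (by positivity : (0:ℝ) < ‖s‖⁻¹),
      abs_of_pos (by positivity : (0:ℝ) < ‖t‖⁻¹),
      Real.mul_rpow (by positivity) (by positivity),
      Real.mul_rpow (by positivity) (abs_nonneg _),
      Real.inv_rpow hns.le, Real.inv_rpow hnt.le, div_eq_mul_inv, mul_inv]
    ring
  rw [key x y hx hy, key x z hx hz, key y z hy hz]
  have hb1 : ∀ (s t : H), ‖s‖ = 1 → ‖t‖ = 1 → |(inner ℝ s t : ℝ)| ≤ 1 := by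
    intro s t hs ht
    have := abs_real_inner_le_norm s t
    rw [hs, ht] at this; simpa using this
  have htri := sine_triangle u v w hu hv hw
  rw [← sq_abs (inner ℝ u v : ℝ), ← sq_abs (inner ℝ u w : ℝ), ← sq_abs (inner ℝ v w : ℝ)] at htri
  exact combine hp (abs_nonneg _) (hb1 u v hu hv) (abs_nonneg _) (hb1 u w hu hw)
    (abs_nonneg _) (hb1 v w hv hw) htri

end
end

section
/- For vectors x, y, e in a complex inner product space with ‖e‖ = 1 and real p ≥ 2, one has ‖x‖^p‖y‖^p − |⟨x,y⟩|^p ≥ |‖x‖(‖y‖^p − |⟨y,e⟩|^p)^{1/p} − ‖y‖(‖x‖^p − |⟨x,e⟩|^p)^{1/p}|^p. -/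
open scoped ComplexConjugate
local notation "⟪" x ", " y "⟫" => @inner ℂ _ _ x y

open Real


lemma rpow_superadd {a b r : ℝ} (ha : 0 ≤ a) (hb : 0 ≤ b) (hr : 1 ≤ r) :
    a ^ r + b ^ r ≤ (a + b) ^ r := by
  have h := NNReal.add_rpow_le_rpow_add a.toNNReal b.toNNReal hr
  have h2 := NNReal.coe_le_coe.2 h
  push_cast at h2
  rwa [Real.coe_toNNReal _ ha, Real.coe_toNNReal _ hb] at h2

lemma rpow_sub_superadd {s t r : ℝ} (ht : 0 ≤ t) (hts : t ≤ s) (hr : 1 ≤ r) :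
    (s - t) ^ r ≤ s ^ r - t ^ r := by
  have h := rpow_superadd (sub_nonneg.2 hts) ht hr
  rw [sub_add_cancel] at h
  linarith

lemma bernoulli_aux {c p : ℝ} (hc : 0 ≤ c) (hc1 : c ≤ 1) (hp : 2 ≤ p) :
    1 - c ^ p ≤ (p / 2) * (1 - c ^ 2) := by
  have hb := one_add_mul_self_le_rpow_one_add (s := c ^ 2 - 1) (by nlinarith) (p := p / 2) (by linarith)
  have h2 : (1 + (c ^ 2 - 1)) ^ (p / 2) = c ^ p := by
    have : (1 : ℝ) + (c ^ 2 - 1) = c ^ 2 := by ring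
    rw [this, ← Real.rpow_natCast_mul hc 2 (p / 2)]
    congr 1
    push_cast
    ring
  rw [h2] at hb
  linarith

noncomputable def gfun (p t : ℝ) : ℝ := (1 - Real.cos t ^ p) ^ (1 / p)

lemma gfun_deriv {p : ℝ} (hp : 2 ≤ p) {t : ℝ} (ht : t ∈ Set.Ioo 0 (π / 2)) :
    HasDerivAt (gfun p)
      ((1 - Real.cos t ^ p) ^ (1 / p - 1) * Real.cos t ^ (p - 1) * Real.sin t) t := by
  obtain ⟨ht0, ht2⟩ := ht
  have hp0 : (0 : ℝ) < p := by linarith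
  have hc : 0 < Real.cos t := Real.cos_pos_of_mem_Ioo ⟨by linarith [Real.pi_pos], ht2⟩
  have hc1 : Real.cos t < 1 := by
    have := Real.cos_lt_cos_of_nonneg_of_le_pi le_rfl (by linarith [Real.pi_pos]) ht0
    simpa using this
  have hu : 0 < 1 - Real.cos t ^ p := by
    have : Real.cos t ^ p < 1 ^ p := Real.rpow_lt_rpow hc.le hc1 hp0
    simpa using this
  have h1 : HasDerivAt (fun t => 1 - Real.cos t ^ p) (p * Real.cos t ^ (p - 1) * Real.sin t) t := by
    have hcos : HasDerivAt Real.cos (-Real.sin t) t := Real.hasDerivAt_cos t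
    have hpowc : HasDerivAt (fun x : ℝ => x ^ p) (p * Real.cos t ^ (p - 1)) (Real.cos t) :=
      Real.hasDerivAt_rpow_const (Or.inl hc.ne')
    have := (hpowc.comp t hcos).const_sub 1
    refine this.congr_deriv ?_
    ring
  have houter : HasDerivAt (fun u : ℝ => u ^ (1 / p))
      ((1 / p) * (1 - Real.cos t ^ p) ^ (1 / p - 1)) (1 - Real.cos t ^ p) :=
    Real.hasDerivAt_rpow_const (Or.inl hu.ne')
  have := houter.comp t h1
  refine this.congr_deriv ?_
  field_simp

lemma gfun_deriv2 {p : ℝ} (hp : 2 ≤ p) {t : ℝ} (ht : t ∈ Set.Ioo 0 (π / 2)) :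
    ∃ D, HasDerivAt
      (fun t => (1 - Real.cos t ^ p) ^ (1 / p - 1) * Real.cos t ^ (p - 1) * Real.sin t) D t
      ∧ D ≤ 0 := by
  obtain ⟨ht0, ht2⟩ := ht
  have hp0 : (0 : ℝ) < p := by linarith
  have hc : 0 < Real.cos t := Real.cos_pos_of_mem_Ioo ⟨by linarith [Real.pi_pos], ht2⟩
  have hc1 : Real.cos t < 1 := by
    have := Real.cos_lt_cos_of_nonneg_of_le_pi le_rfl (by linarith [Real.pi_pos]) ht0
    simpa using this
  have hs : 0 < Real.sin t := Real.sin_pos_of_pos_of_lt_pi ht0 (by linarith [Real.pi_pos])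
  set c := Real.cos t with hcdef
  set s := Real.sin t with hsdef
  set u := 1 - c ^ p with hudef
  have hu : 0 < u := by
    have : c ^ p < 1 ^ p := Real.rpow_lt_rpow hc.le hc1 hp0
    simp only [Real.one_rpow] at this
    simp [hudef]; linarith
  -- inner derivative
  have h1 : HasDerivAt (fun t => 1 - Real.cos t ^ p) (p * c ^ (p - 1) * s) t := by
    have hcos : HasDerivAt Real.cos (-s) t := Real.hasDerivAt_cos t
    have hpowc : HasDerivAt (fun x : ℝ => x ^ p) (p * c ^ (p - 1)) c :=
      Real.hasDerivAt_rpow_const (Or.inl hc.ne')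
    have := (hpowc.comp t hcos).const_sub 1
    refine this.congr_deriv ?_
    ring
  have hF1 : HasDerivAt (fun t => (1 - Real.cos t ^ p) ^ (1 / p - 1))
      ((1 / p - 1) * u ^ (1 / p - 1 - 1) * (p * c ^ (p - 1) * s)) t := by
    have houter : HasDerivAt (fun x : ℝ => x ^ (1 / p - 1))
        ((1 / p - 1) * u ^ (1 / p - 1 - 1)) u := Real.hasDerivAt_rpow_const (Or.inl hu.ne')
    exact houter.comp t h1
  have hF2 : HasDerivAt (fun t => Real.cos t ^ (p - 1)) ((p - 1) * c ^ (p - 1 - 1) * (-s)) t := by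
    have houter : HasDerivAt (fun x : ℝ => x ^ (p - 1))
        ((p - 1) * c ^ (p - 1 - 1)) c := Real.hasDerivAt_rpow_const (Or.inl hc.ne')
    exact houter.comp t (Real.hasDerivAt_cos t)
  have hF3 : HasDerivAt Real.sin c t := Real.hasDerivAt_sin t
  have hD := (hF1.mul hF2).mul hF3
  refine ⟨_, hD, ?_⟩
  -- now show the derivative value is ≤ 0
  set C2 := c ^ (p - 2) with hC2def
  set U2 := u ^ (1 / p - 2) with hU2def
  have hC2 : 0 < C2 := Real.rpow_pos_of_pos hc _
  have hU2 : 0 < U2 := Real.rpow_pos_of_pos hu _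
  have e1 : c ^ (p - 1) = C2 * c := by
    rw [hC2def, show p - 1 = (p - 2) + 1 by ring, Real.rpow_add hc, Real.rpow_one]
  have e2 : c ^ (p - 1 - 1) = C2 := by rw [show p - 1 - 1 = p - 2 by ring]
  have e3 : u ^ (1 / p - 1) = U2 * u := by
    rw [hU2def, show (1 / p - 1) = (1 / p - 2) + 1 by ring, Real.rpow_add hu, Real.rpow_one]
  have e4 : u ^ (1 / p - 1 - 1) = U2 := by rw [show 1 / p - 1 - 1 = 1 / p - 2 by ring]
  have hrel : C2 * c ^ 2 = 1 - u := by
    rw [hC2def, hudef, ← Real.rpow_natCast c 2, ← Real.rpow_add hc]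
    norm_num
  have hkey : ((1 / p - 1) * u ^ (1 / p - 1 - 1) * (p * c ^ (p - 1) * s) * c ^ (p - 1) +
        u ^ (1 / p - 1) * ((p - 1) * c ^ (p - 1 - 1) * (-s))) * s +
        u ^ (1 / p - 1) * c ^ (p - 1) * c
      = U2 * C2 * (u * c ^ 2 - (p - 1) * s ^ 2) := by
    rw [e1, e2, e3, e4]
    have hpne : p ≠ 0 := hp0.ne'
    have hpp : 1 / p * p = 1 := by field_simp
    linear_combination ((1 - p) * U2 * C2 * s ^ 2) * hrel + (U2 * C2 ^ 2 * c ^ 2 * s ^ 2) * hpp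
  show ((1 / p - 1) * u ^ (1 / p - 1 - 1) * (p * c ^ (p - 1) * s) * c ^ (p - 1) +
        u ^ (1 / p - 1) * ((p - 1) * c ^ (p - 1 - 1) * (-s))) * s +
        u ^ (1 / p - 1) * c ^ (p - 1) * c ≤ 0
  rw [hkey]
  have hcs : s ^ 2 = 1 - c ^ 2 := by
    have h := Real.sin_sq_add_cos_sq t
    simp only [← hsdef, ← hcdef] at h
    linarith
  have hbern : u ≤ (p / 2) * s ^ 2 := by
    have hb := bernoulli_aux hc.le hc1.le hp
    rw [hudef, hcs]
    linarith
  clear_value U2 C2 u s c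
  have hc2le : c ^ 2 ≤ 1 := by nlinarith
  have h1 : u * c ^ 2 ≤ u := by nlinarith
  have h2 : (p / 2) * s ^ 2 ≤ (p - 1) * s ^ 2 := by nlinarith [sq_nonneg s]
  have hfin : u * c ^ 2 - (p - 1) * s ^ 2 ≤ 0 := by linarith
  exact mul_nonpos_of_nonneg_of_nonpos (mul_pos hU2 hC2).le hfin
noncomputable def phifun (p t : ℝ) : ℝ :=
  (1 - Real.cos t ^ p) ^ (1 / p - 1) * Real.cos t ^ (p - 1) * Real.sin t

lemma gfun_concave {p : ℝ} (hp : 2 ≤ p) : ConcaveOn ℝ (Set.Icc 0 (π / 2)) (gfun p) := by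
  have hp0 : (0 : ℝ) < p := by linarith
  have hev : ∀ x ∈ Set.Ioo 0 (π / 2), deriv (gfun p) =ᶠ[nhds x] phifun p := by
    intro x hx
    filter_upwards [isOpen_Ioo.mem_nhds hx] with y hy
    exact (gfun_deriv hp hy).deriv
  apply concaveOn_of_deriv2_nonpos (convex_Icc _ _)
  · have hcont : Continuous (gfun p) := by
      apply continuous_iff_continuousAt.2
      intro x
      have h1 : ContinuousAt (fun t => 1 - Real.cos t ^ p) x :=
        continuousAt_const.sub
          ((Real.continuousAt_rpow_const _ _ (Or.inr hp0.le)).comp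
            Real.continuous_cos.continuousAt)
      exact (Real.continuousAt_rpow_const _ _ (Or.inr (by positivity))).comp h1
    exact hcont.continuousOn
  · rw [interior_Icc]
    intro x hx
    exact (gfun_deriv hp hx).differentiableAt.differentiableWithinAt
  · rw [interior_Icc]
    intro x hx
    obtain ⟨D, hD, _⟩ := gfun_deriv2 hp hx
    exact (hD.differentiableAt.congr_of_eventuallyEq (hev x hx)).differentiableWithinAt
  · rw [interior_Icc]
    intro x hx
    obtain ⟨D, hD, hDle⟩ := gfun_deriv2 hp hx
    have h2 : deriv^[2] (gfun p) x = deriv (deriv (gfun p)) x := rfl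
    rw [h2, (hev x hx).deriv_eq]
    rw [show deriv (phifun p) x = D from hD.deriv]
    exact hDle

lemma gfun_zero {p : ℝ} (hp : 2 ≤ p) : gfun p 0 = 0 := by
  have hp0 : p⁻¹ ≠ 0 := by
    have : (0:ℝ) < p := by linarith
    positivity
  simp [gfun, Real.one_rpow, Real.zero_rpow hp0]

lemma cos_p_le_one {p : ℝ} (hp : 2 ≤ p) {t : ℝ} (ht : t ∈ Set.Icc 0 (π / 2)) :
    Real.cos t ^ p ≤ 1 ∧ 0 ≤ Real.cos t := by
  have hc0 : 0 ≤ Real.cos t :=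
    Real.cos_nonneg_of_mem_Icc ⟨by linarith [ht.1, Real.pi_pos], ht.2⟩
  exact ⟨Real.rpow_le_one hc0 (Real.cos_le_one t) (by linarith), hc0⟩

lemma gfun_nonneg {p : ℝ} (hp : 2 ≤ p) {t : ℝ} (ht : t ∈ Set.Icc 0 (π / 2)) : 0 ≤ gfun p t :=
  Real.rpow_nonneg (by linarith [(cos_p_le_one hp ht).1]) _

lemma gfun_mono {p : ℝ} (hp : 2 ≤ p) : MonotoneOn (gfun p) (Set.Icc 0 (π / 2)) := by
  intro a ha b hb hab
  have hca := (cos_p_le_one hp ha).2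
  have hcb := (cos_p_le_one hp hb).2
  have hcos : Real.cos b ≤ Real.cos a :=
    Real.cos_le_cos_of_nonneg_of_le_pi ha.1 (by linarith [hb.2, Real.pi_pos]) hab
  have h1 : Real.cos b ^ p ≤ Real.cos a ^ p := Real.rpow_le_rpow hcb hcos (by linarith)
  exact Real.rpow_le_rpow (by linarith [(cos_p_le_one hp ha).1]) (by linarith) (by positivity)

lemma gfun_subadd {p : ℝ} (hp : 2 ≤ p) {s t : ℝ} (hs : 0 ≤ s) (ht : 0 ≤ t)
    (hst : s + t ≤ π / 2) : gfun p (s + t) ≤ gfun p s + gfun p t := by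
  rcases eq_or_lt_of_le hs with rfl | hs0
  · rw [zero_add]
    have := gfun_nonneg hp (t := 0) ⟨le_rfl, by linarith [Real.pi_pos]⟩
    rw [gfun_zero hp]
    linarith
  rcases eq_or_lt_of_le ht with rfl | ht0
  · rw [add_zero]
    rw [gfun_zero hp]
    linarith
  have hσ : 0 < s + t := by linarith
  have hmem : s + t ∈ Set.Icc 0 (π / 2) := ⟨by linarith, hst⟩
  have hmem0 : (0 : ℝ) ∈ Set.Icc 0 (π / 2) := ⟨le_rfl, by linarith [Real.pi_pos]⟩
  have hconc := gfun_concave hp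
  have h1 := hconc.2 hmem hmem0 (le_of_lt (by positivity : 0 < s / (s + t)))
      (le_of_lt (by positivity : 0 < t / (s + t))) (by field_simp)
  have h2 := hconc.2 hmem hmem0 (le_of_lt (by positivity : 0 < t / (s + t)))
      (le_of_lt (by positivity : 0 < s / (s + t))) (by field_simp; ring)
  rw [smul_eq_mul, smul_eq_mul, smul_eq_mul, smul_eq_mul] at h1 h2
  have e1 : s / (s + t) * (s + t) + t / (s + t) * 0 = s := by field_simp; ring
  have e2 : t / (s + t) * (s + t) + s / (s + t) * 0 = t := by field_simp; ring
  rw [e1, gfun_zero hp, mul_zero, add_zero] at h1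
  rw [e2, gfun_zero hp, mul_zero, add_zero] at h2
  have : s / (s + t) * gfun p (s + t) + t / (s + t) * gfun p (s + t) = gfun p (s + t) := by
    field_simp
  linarith

lemma gfun_abs_sub {p : ℝ} (hp : 2 ≤ p) {s t : ℝ} (hs : s ∈ Set.Icc 0 (π / 2))
    (ht : t ∈ Set.Icc 0 (π / 2)) : |gfun p s - gfun p t| ≤ gfun p |s - t| := by
  have key : ∀ a b : ℝ, a ∈ Set.Icc 0 (π / 2) → b ∈ Set.Icc 0 (π / 2) → b ≤ a →
      gfun p a - gfun p b ≤ gfun p (a - b) := by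
    intro a b ha hb hba
    have := gfun_subadd hp (sub_nonneg.2 hba) hb.1 (by rw [sub_add_cancel]; exact ha.2)
    rw [sub_add_cancel] at this
    linarith
  rcases le_total t s with h | h
  · rw [abs_of_nonneg (sub_nonneg.2 ((gfun_mono hp) ht hs h)),
      abs_of_nonneg (sub_nonneg.2 h)]
    exact key s t hs ht h
  · rw [abs_of_nonpos (sub_nonpos.2 ((gfun_mono hp) hs ht h)),
      abs_of_nonpos (sub_nonpos.2 h), neg_sub, neg_sub]
    exact key t s ht hs h
lemma scalar_key {p X Y A B T : ℝ} (hp : 2 ≤ p) (hX : 0 ≤ X) (hY : 0 ≤ Y)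
    (hA : 0 ≤ A) (hAX : A ≤ X) (hB : 0 ≤ B) (hBY : B ≤ Y) (hT : 0 ≤ T)
    (hTb : T ≤ A * B + Real.sqrt (X ^ 2 - A ^ 2) * Real.sqrt (Y ^ 2 - B ^ 2)) :
    |X * (Y ^ p - B ^ p) ^ (1 / p) - Y * (X ^ p - A ^ p) ^ (1 / p)| ^ p
      ≤ X ^ p * Y ^ p - T ^ p := by
  have hp0 : (0 : ℝ) < p := by linarith
  have hpne : p ≠ 0 := hp0.ne'
  have hpinv : (1 : ℝ) / p ≠ 0 := by positivity
  have hpinv' : p⁻¹ ≠ 0 := by positivity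
  rcases eq_or_lt_of_le hX with rfl | hX0
  · have hA0 : A = 0 := le_antisymm hAX hA
    subst hA0
    have hT0 : T = 0 := by
      have : Real.sqrt ((0:ℝ) ^ 2 - 0 ^ 2) = 0 := by norm_num
      rw [this] at hTb
      nlinarith
    subst hT0
    simp [Real.zero_rpow hpne, Real.zero_rpow hpinv, Real.zero_rpow hpinv', abs_of_nonneg]
  rcases eq_or_lt_of_le hY with rfl | hY0
  · have hB0 : B = 0 := le_antisymm hBY hB
    subst hB0
    have hT0 : T = 0 := by
      have h0 : Real.sqrt ((0:ℝ) ^ 2 - 0 ^ 2) = 0 := by norm_num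
      rw [h0, mul_zero] at hTb
      nlinarith
    subst hT0
    simp [Real.zero_rpow hpne, Real.zero_rpow hpinv, Real.zero_rpow hpinv', abs_of_nonneg]
  -- main case
  set φ := Real.arccos (A / X) with hφdef
  set θ := Real.arccos (B / Y) with hθdef
  have hAX1 : A / X ≤ 1 := (div_le_one hX0).2 hAX
  have hAX0 : 0 ≤ A / X := by positivity
  have hBY1 : B / Y ≤ 1 := (div_le_one hY0).2 hBY
  have hBY0 : 0 ≤ B / Y := by positivity
  have hφmem : φ ∈ Set.Icc 0 (π / 2) :=
    ⟨Real.arccos_nonneg _, Real.arccos_le_pi_div_two.2 hAX0⟩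
  have hθmem : θ ∈ Set.Icc 0 (π / 2) :=
    ⟨Real.arccos_nonneg _, Real.arccos_le_pi_div_two.2 hBY0⟩
  have hcosφ : Real.cos φ = A / X := Real.cos_arccos (by linarith) hAX1
  have hcosθ : Real.cos θ = B / Y := Real.cos_arccos (by linarith) hBY1
  have hXpne : (0:ℝ) < X ^ p := Real.rpow_pos_of_pos hX0 p
  have hYpne : (0:ℝ) < Y ^ p := Real.rpow_pos_of_pos hY0 p
  -- translations
  have trA : A = X * Real.cos φ := by rw [hcosφ]; field_simp
  have trB : B = Y * Real.cos θ := by rw [hcosθ]; field_simp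
  have trU : Real.sqrt (X ^ 2 - A ^ 2) = X * Real.sin φ := by
    have h1 : X ^ 2 - A ^ 2 = X ^ 2 * (1 - (A / X) ^ 2) := by field_simp
    rw [h1, Real.sqrt_mul (sq_nonneg X), Real.sqrt_sq hX0.le, hφdef, Real.sin_arccos]
  have trV : Real.sqrt (Y ^ 2 - B ^ 2) = Y * Real.sin θ := by
    have h1 : Y ^ 2 - B ^ 2 = Y ^ 2 * (1 - (B / Y) ^ 2) := by field_simp
    rw [h1, Real.sqrt_mul (sq_nonneg Y), Real.sqrt_sq hY0.le, hθdef, Real.sin_arccos]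
  have trS : (X ^ p - A ^ p) ^ (1 / p) = X * gfun p φ := by
    rw [gfun, hcosφ]
    have h1 : (A / X) ^ p = A ^ p / X ^ p := Real.div_rpow hA hX0.le p
    have h2 : X ^ p - A ^ p = X ^ p * (1 - (A / X) ^ p) := by
      rw [h1]; field_simp
    have h3 : (0:ℝ) ≤ 1 - (A / X) ^ p := by
      have := Real.rpow_le_one hAX0 hAX1 hp0.le
      linarith
    rw [h2, Real.mul_rpow hXpne.le h3, one_div, Real.rpow_rpow_inv hX0.le hpne, ← one_div]
  have trSy : (Y ^ p - B ^ p) ^ (1 / p) = Y * gfun p θ := by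
    rw [gfun, hcosθ]
    have h1 : (B / Y) ^ p = B ^ p / Y ^ p := Real.div_rpow hB hY0.le p
    have h2 : Y ^ p - B ^ p = Y ^ p * (1 - (B / Y) ^ p) := by
      rw [h1]; field_simp
    have h3 : (0:ℝ) ≤ 1 - (B / Y) ^ p := by
      have := Real.rpow_le_one hBY0 hBY1 hp0.le
      linarith
    rw [h2, Real.mul_rpow hYpne.le h3, one_div, Real.rpow_rpow_inv hY0.le hpne, ← one_div]
  -- bound on T
  have hTXY : T ≤ X * Y * Real.cos (φ - θ) := by
    calc T ≤ A * B + Real.sqrt (X ^ 2 - A ^ 2) * Real.sqrt (Y ^ 2 - B ^ 2) := hTb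
    _ = X * Y * Real.cos (φ - θ) := by
        rw [trU, trV, Real.cos_sub]
        nth_rewrite 1 [trA, trB]
        ring
  -- the difference angle
  have hδmem : |φ - θ| ∈ Set.Icc 0 (π / 2) := by
    constructor
    · exact abs_nonneg _
    · rw [abs_le]
      constructor <;> [linarith [hφmem.1, hθmem.2]; linarith [hφmem.2, hθmem.1]]
  have hcosδ : Real.cos (φ - θ) = Real.cos |φ - θ| := (Real.cos_abs _).symm
  obtain ⟨hcpδ, hcδ0⟩ := cos_p_le_one hp hδmem
  have hgδ : gfun p |φ - θ| ^ p = 1 - Real.cos |φ - θ| ^ p := by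
    rw [gfun, one_div, Real.rpow_inv_rpow (by linarith) hpne]
  -- assemble
  have hXYp : X ^ p * Y ^ p = (X * Y) ^ p := (Real.mul_rpow hX0.le hY0.le).symm
  have hXY0 : (0:ℝ) < X * Y := mul_pos hX0 hY0
  have hTp : T ^ p ≤ (X * Y) ^ p * Real.cos |φ - θ| ^ p := by
    rw [← Real.mul_rpow hXY0.le hcδ0, ← hcosδ]
    exact Real.rpow_le_rpow hT hTXY hp0.le
  have habs : |X * (Y ^ p - B ^ p) ^ (1 / p) - Y * (X ^ p - A ^ p) ^ (1 / p)|
      = (X * Y) * |gfun p θ - gfun p φ| := by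
    rw [trS, trSy, show X * (Y * gfun p θ) - Y * (X * gfun p φ)
        = (X * Y) * (gfun p θ - gfun p φ) by ring, abs_mul, abs_of_pos hXY0]
  rw [habs, Real.mul_rpow hXY0.le (abs_nonneg _)]
  have hgle : |gfun p θ - gfun p φ| ^ p ≤ gfun p |φ - θ| ^ p := by
    apply Real.rpow_le_rpow (abs_nonneg _) _ hp0.le
    have h := gfun_abs_sub hp hθmem hφmem
    rwa [abs_sub_comm θ φ] at h
  calc (X * Y) ^ p * |gfun p θ - gfun p φ| ^ p
      ≤ (X * Y) ^ p * gfun p |φ - θ| ^ p := by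
        apply mul_le_mul_of_nonneg_left hgle (Real.rpow_nonneg hXY0.le p)
    _ = (X * Y) ^ p - (X * Y) ^ p * Real.cos |φ - θ| ^ p := by rw [hgδ]; ring
    _ ≤ X ^ p * Y ^ p - T ^ p := by rw [hXYp]; linarith [hTp]

lemma inner_refined_bound {H : Type*} [NormedAddCommGroup H] [InnerProductSpace ℂ H]
    (x y e : H) (he : ‖e‖ = 1) :
    ‖⟪x, y⟫‖ ≤ ‖⟪x, e⟫‖ * ‖⟪y, e⟫‖ +
      Real.sqrt (‖x‖ ^ 2 - ‖⟪x, e⟫‖ ^ 2) * Real.sqrt (‖y‖ ^ 2 - ‖⟪y, e⟫‖ ^ 2) := by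
  set a : ℂ := ⟪e, x⟫ with hadef
  set b : ℂ := ⟪e, y⟫ with hbdef
  have he1 : ⟪e, e⟫ = (1 : ℂ) := by
    rw [inner_self_eq_norm_sq_to_K, he]
    norm_num
  have hax : ⟪x, e⟫ = conj a := by rw [hadef, inner_conj_symm]
  have hby : ⟪y, e⟫ = conj b := by rw [hbdef, inner_conj_symm]
  set u : H := x - a • e with hudef
  set v : H := y - b • e with hvdef
  have huv : ⟪u, v⟫ = ⟪x, y⟫ - conj a * b := by
    rw [hudef, hvdef]
    simp only [inner_sub_left, inner_sub_right, inner_smul_left, inner_smul_right, he1, mul_one,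
      hax, ← hadef, ← hbdef]
    ring
  have hxy : ⟪x, y⟫ = conj a * b + ⟪u, v⟫ := by rw [huv]; ring
  have hnu : ‖u‖ ^ 2 = ‖x‖ ^ 2 - ‖a‖ ^ 2 := by
    rw [hudef, @norm_sub_sq ℂ]
    have h1 : RCLike.re ⟪x, a • e⟫ = ‖a‖ ^ 2 := by
      rw [inner_smul_right, hax, RCLike.mul_conj]
      rw [← RCLike.ofReal_pow, RCLike.ofReal_re]
    have h2 : ‖a • e‖ = ‖a‖ := by rw [norm_smul, he, mul_one]
    rw [h1, h2]
    ring
  have hnv : ‖v‖ ^ 2 = ‖y‖ ^ 2 - ‖b‖ ^ 2 := by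
    rw [hvdef, @norm_sub_sq ℂ]
    have h1 : RCLike.re ⟪y, b • e⟫ = ‖b‖ ^ 2 := by
      rw [inner_smul_right, hby, RCLike.mul_conj]
      rw [← RCLike.ofReal_pow, RCLike.ofReal_re]
    have h2 : ‖b • e‖ = ‖b‖ := by rw [norm_smul, he, mul_one]
    rw [h1, h2]
    ring
  have hXA : ‖⟪x, e⟫‖ = ‖a‖ := by rw [hax, RCLike.norm_conj]
  have hYB : ‖⟪y, e⟫‖ = ‖b‖ := by rw [hby, RCLike.norm_conj]
  have hsu : Real.sqrt (‖x‖ ^ 2 - ‖⟪x, e⟫‖ ^ 2) = ‖u‖ := by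
    rw [hXA, ← hnu, Real.sqrt_sq (norm_nonneg u)]
  have hsv : Real.sqrt (‖y‖ ^ 2 - ‖⟪y, e⟫‖ ^ 2) = ‖v‖ := by
    rw [hYB, ← hnv, Real.sqrt_sq (norm_nonneg v)]
  rw [hsu, hsv, hXA, hYB]
  calc ‖⟪x, y⟫‖ = ‖conj a * b + ⟪u, v⟫‖ := by rw [← hxy]
    _ ≤ ‖conj a * b‖ + ‖⟪u, v⟫‖ := norm_add_le _ _
    _ ≤ ‖a‖ * ‖b‖ + ‖u‖ * ‖v‖ := by
        rw [norm_mul, RCLike.norm_conj]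
        exact add_le_add le_rfl (norm_inner_le_norm u v)
theorem schwarz_p_refinement {H : Type*} [NormedAddCommGroup H] [InnerProductSpace ℂ H]
    (x y e : H) (he : ‖e‖ = 1) (p : ℝ) (hp : 2 ≤ p) :
    ‖x‖ ^ p * ‖y‖ ^ p - ‖⟪x, y⟫‖ ^ p ≥
      |‖x‖ * (‖y‖ ^ p - ‖⟪y, e⟫‖ ^ p) ^ (1 / p) -
        ‖y‖ * (‖x‖ ^ p - ‖⟪x, e⟫‖ ^ p) ^ (1 / p)| ^ p := by
  rw [ge_iff_le]
  have hxe : ‖⟪x, e⟫‖ ≤ ‖x‖ := by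
    have h := norm_inner_le_norm (𝕜 := ℂ) x e
    rwa [he, mul_one] at h
  have hye : ‖⟪y, e⟫‖ ≤ ‖y‖ := by
    have h := norm_inner_le_norm (𝕜 := ℂ) y e
    rwa [he, mul_one] at h
  exact scalar_key hp (norm_nonneg x) (norm_nonneg y) (norm_nonneg _) hxe (norm_nonneg _) hye
    (norm_nonneg _) (inner_refined_bound x y e he)
end

section
/- For vectors x, y, e in a complex inner product space with ‖e‖ = 1, the inequality ‖x‖²‖y‖² − |⟨x,y⟩|² ≥ (|⟨x,e⟩|·√(‖y‖² − |⟨y,e⟩|²) − |⟨y,e⟩|·√(‖x‖² − |⟨x,e⟩|²))² holds. -/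
open scoped ComplexConjugate
local notation "⟪" x ", " y "⟫" => @inner ℂ _ _ x y

theorem schwarz_det_refinement {H : Type*} [NormedAddCommGroup H] [InnerProductSpace ℂ H]
    (x y e : H) (he : ‖e‖ = 1) :
    ‖x‖ ^ 2 * ‖y‖ ^ 2 - ‖⟪x, y⟫‖ ^ 2 ≥
      (‖⟪x, e⟫‖ * Real.sqrt (‖y‖ ^ 2 - ‖⟪y, e⟫‖ ^ 2) -
        ‖⟪y, e⟫‖ * Real.sqrt (‖x‖ ^ 2 - ‖⟪x, e⟫‖ ^ 2)) ^ 2 := by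
  have hee : ⟪e, e⟫ = 1 := by
    rw [inner_self_eq_norm_sq_to_K, he]; norm_num
  set u : H := x - ⟪e, x⟫ • e with hu_def
  set v : H := y - ⟪e, y⟫ • e with hv_def
  have hu : ⟪e, u⟫ = 0 := by
    simp [hu_def, inner_sub_right, inner_smul_right, hee, he]
  have hv : ⟪e, v⟫ = 0 := by
    simp [hv_def, inner_sub_right, inner_smul_right, hee, he]
  have hue : ⟪u, e⟫ = 0 := by
    rw [← inner_conj_symm, hu, map_zero]
  have hve : ⟪v, e⟫ = 0 := by
    rw [← inner_conj_symm, hv, map_zero]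
  have hx : x = ⟪e, x⟫ • e + u := by simp [hu_def]
  have hy : y = ⟪e, y⟫ • e + v := by simp [hv_def]
  have hxn : ‖x‖ ^ 2 = ‖⟪x, e⟫‖ ^ 2 + ‖u‖ ^ 2 := by
    have h0 : ⟪(⟪e, x⟫ • e : H), u⟫ = 0 := by
      rw [inner_smul_left, hu, mul_zero]
    have := @norm_add_sq ℂ H _ _ _ (⟪e, x⟫ • e) u
    rw [h0] at this
    simp only [map_zero, mul_zero, add_zero] at this
    rw [← hx] at this
    rw [this, norm_smul, he]
    have : ‖⟪x, e⟫‖ = ‖⟪e, x⟫‖ := by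
      rw [← inner_conj_symm x e, Complex.norm_conj]
    rw [this]
    simp
  have hyn : ‖y‖ ^ 2 = ‖⟪y, e⟫‖ ^ 2 + ‖v‖ ^ 2 := by
    have h0 : ⟪(⟪e, y⟫ • e : H), v⟫ = 0 := by
      rw [inner_smul_left, hv, mul_zero]
    have := @norm_add_sq ℂ H _ _ _ (⟪e, y⟫ • e) v
    rw [h0] at this
    simp only [map_zero, mul_zero, add_zero] at this
    rw [← hy] at this
    rw [this, norm_smul, he]
    have : ‖⟪y, e⟫‖ = ‖⟪e, y⟫‖ := by
      rw [← inner_conj_symm y e, Complex.norm_conj]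
    rw [this]
    simp
  have hinner : ⟪x, y⟫ = conj ⟪e, x⟫ * ⟪e, y⟫ + ⟪u, v⟫ := by
    conv_lhs => rw [hx, hy]
    rw [inner_add_left, inner_add_right, inner_add_right, inner_smul_left,
      inner_smul_right, inner_smul_left, inner_smul_right, hee, hv, hue]
    ring
  have hsx : Real.sqrt (‖x‖ ^ 2 - ‖⟪x, e⟫‖ ^ 2) = ‖u‖ := by
    rw [hxn]; simp [Real.sqrt_sq (norm_nonneg u)]
  have hsy : Real.sqrt (‖y‖ ^ 2 - ‖⟪y, e⟫‖ ^ 2) = ‖v‖ := by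
    rw [hyn]; simp [Real.sqrt_sq (norm_nonneg v)]
  rw [hsx, hsy]
  have hP : ‖⟪x, y⟫‖ ≤ ‖⟪x, e⟫‖ * ‖⟪y, e⟫‖ + ‖u‖ * ‖v‖ := by
    rw [hinner]
    calc ‖(conj ⟪e, x⟫ * ⟪e, y⟫ + ⟪u, v⟫)‖
        ≤ ‖(conj ⟪e, x⟫ * ⟪e, y⟫)‖ + ‖⟪u, v⟫‖ := norm_add_le _ _
      _ ≤ ‖⟪x, e⟫‖ * ‖⟪y, e⟫‖ + ‖u‖ * ‖v‖ := by
          have h1 : ‖(conj ⟪e, x⟫ * ⟪e, y⟫)‖ =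
              ‖⟪x, e⟫‖ * ‖⟪y, e⟫‖ := by
            rw [norm_mul, Complex.norm_conj, ← inner_conj_symm x e, Complex.norm_conj,
              ← inner_conj_symm y e, Complex.norm_conj]
          have h2 : ‖⟪u, v⟫‖ ≤ ‖u‖ * ‖v‖ := by
            exact norm_inner_le_norm u v
          rw [h1]
          exact add_le_add le_rfl h2
  have hP0 : 0 ≤ ‖⟪x, y⟫‖ := norm_nonneg _
  nlinarith [hxn, hyn, hP, hP0, sq_nonneg (‖⟪x, e⟫‖ * ‖⟪y, e⟫‖ + ‖u‖ * ‖v‖),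
    mul_nonneg (norm_nonneg ⟪x, e⟫) (norm_nonneg ⟪y, e⟫),
    mul_nonneg (norm_nonneg u) (norm_nonneg v)]
end

section
/- For vectors x, y, e in a complex inner product space with ‖e‖ = 1, the inequality ‖x‖²‖y‖² − |Re⟨x,y⟩|² ≥ (|Re⟨x,e⟩|·√(‖y‖² − |Re⟨y,e⟩|²) − |Re⟨y,e⟩|·√(‖x‖² − |Re⟨x,e⟩|²))² holds. -/
open scoped ComplexConjugate
local notation "⟪" x ", " y "⟫" => @inner ℂ _ _ x y

set_option maxHeartbeats 1000000 in
lemma aux_real {H : Type*} [NormedAddCommGroup H] [InnerProductSpace ℝ H]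
    (x y e : H) (he : ‖e‖ = 1) :
    ‖x‖ ^ 2 * ‖y‖ ^ 2 - |(inner ℝ x y : ℝ)| ^ 2 ≥
      (|(inner ℝ x e : ℝ)| * Real.sqrt (‖y‖ ^ 2 - |(inner ℝ y e : ℝ)| ^ 2) -
        |(inner ℝ y e : ℝ)| * Real.sqrt (‖x‖ ^ 2 - |(inner ℝ x e : ℝ)| ^ 2)) ^ 2 := by
  set a : ℝ := inner ℝ x e with ha
  set b : ℝ := inner ℝ y e with hb
  set x' := x - a • e with hx'
  set y' := y - b • e with hy'
  have hxe : (inner ℝ x' e : ℝ) = 0 := by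
    simp [hx', inner_sub_left, real_inner_smul_left, real_inner_self_eq_norm_sq, he, ← ha]
  have hye : (inner ℝ y' e : ℝ) = 0 := by
    simp [hy', inner_sub_left, real_inner_smul_left, real_inner_self_eq_norm_sq, he, ← hb]
  have hee : (inner ℝ e e : ℝ) = 1 := by
    rw [real_inner_self_eq_norm_sq, he]; norm_num
  have hxdec : ‖x‖ ^ 2 = a ^ 2 + ‖x'‖ ^ 2 := by
    have : x = x' + a • e := by rw [hx']; abel
    rw [this]
    rw [← real_inner_self_eq_norm_sq, ← real_inner_self_eq_norm_sq]
    simp only [inner_add_add_self, real_inner_smul_left, real_inner_smul_right, hxe,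
      real_inner_comm x' e, hee]
    ring
  have hydec : ‖y‖ ^ 2 = b ^ 2 + ‖y'‖ ^ 2 := by
    have : y = y' + b • e := by rw [hy']; abel
    rw [this]
    rw [← real_inner_self_eq_norm_sq, ← real_inner_self_eq_norm_sq]
    simp only [inner_add_add_self, real_inner_smul_left, real_inner_smul_right, hye,
      real_inner_comm y' e, hee]
    ring
  have hey : (inner ℝ e y' : ℝ) = 0 := by rw [real_inner_comm]; exact hye
  have hinner : (inner ℝ x y : ℝ) = a * b + inner ℝ x' y' := by
    have hx2 : x = x' + a • e := by rw [hx']; abel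
    have hy2 : y = y' + b • e := by rw [hy']; abel
    rw [hx2, hy2]
    simp [inner_add_left, inner_add_right, real_inner_smul_left, real_inner_smul_right,
      hxe, hye, hey, hee, he]
    ring
  have hsx : Real.sqrt (‖x‖ ^ 2 - |a| ^ 2) = ‖x'‖ := by
    rw [sq_abs, hxdec]; simp [Real.sqrt_sq (norm_nonneg x')]
  have hsy : Real.sqrt (‖y‖ ^ 2 - |b| ^ 2) = ‖y'‖ := by
    rw [sq_abs, hydec]; simp [Real.sqrt_sq (norm_nonneg y')]
  rw [hsx, hsy, hxdec, hydec, sq_abs, hinner]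
  set t : ℝ := inner ℝ x' y' with ht
  have hcs1 : t ≤ ‖x'‖ * ‖y'‖ := real_inner_le_norm x' y'
  have hcs2 : -(‖x'‖ * ‖y'‖) ≤ t := neg_le_of_abs_le (abs_real_inner_le_norm x' y')
  have hab1 : a * b ≤ |a| * |b| := (le_abs_self _).trans_eq (abs_mul a b)
  have hab2 : -(|a| * |b|) ≤ a * b := (abs_mul a b) ▸ neg_abs_le (a*b)
  have h1 : (|a| * |b| - a * b) * (‖x'‖ * ‖y'‖ + t) ≥ 0 :=
    mul_nonneg (by linarith) (by linarith)
  have h2 : (|a| * |b| + a * b) * (‖x'‖ * ‖y'‖ - t) ≥ 0 :=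
    mul_nonneg (by linarith) (by linarith)
  have h3 : (‖x'‖ * ‖y'‖ - t) * (‖x'‖ * ‖y'‖ + t) ≥ 0 :=
    mul_nonneg (by linarith) (by linarith)
  have ha2 : |a| ^ 2 = a ^ 2 := sq_abs a
  have hb2 : |b| ^ 2 = b ^ 2 := sq_abs b
  nlinarith [h1, h2, h3, ha2, hb2]

theorem schwarz_det_refinement_re {H : Type*} [NormedAddCommGroup H] [InnerProductSpace ℂ H]
    (x y e : H) (he : ‖e‖ = 1) :
    ‖x‖ ^ 2 * ‖y‖ ^ 2 - |(⟪x, y⟫).re| ^ 2 ≥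
      (|(⟪x, e⟫).re| * Real.sqrt (‖y‖ ^ 2 - |(⟪y, e⟫).re| ^ 2) -
        |(⟪y, e⟫).re| * Real.sqrt (‖x‖ ^ 2 - |(⟪x, e⟫).re| ^ 2)) ^ 2 := by
  letI : InnerProductSpace ℝ H := InnerProductSpace.complexToReal
  have h := aux_real (H := H) x y e he
  have hr : ∀ u v : H, (inner ℝ u v : ℝ) = (⟪u, v⟫).re := fun u v => rfl
  rw [hr, hr, hr] at h
  exact h
end

section
/- Let x, y, e ∈ ℂⁿ with Σ_{k=1}^n |e_k|² = 1. Then Σ|x_k|² · Σ|y_k|² − |Σ x_k·conj(y_k)|² ≥ (|Σ x_k·conj(e_k)|·√(Σ|y_k|² − |Σ y_k·conj(e_k)|²) − |Σ y_k·conj(e_k)|·√(Σ|x_k|² − |Σ x_k·conj(e_k)|²))². -/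
open scoped ComplexConjugate InnerProductSpace

lemma key_schwarz_refine {F : Type*} [NormedAddCommGroup F] [InnerProductSpace ℂ F]
    (x y e : F) (he : ‖e‖ = 1) :
    ‖x‖ ^ 2 * ‖y‖ ^ 2 - ‖(⟪x, y⟫_ℂ : ℂ)‖ ^ 2 ≥
      (‖(⟪x, e⟫_ℂ : ℂ)‖ * Real.sqrt (‖y‖ ^ 2 - ‖(⟪y, e⟫_ℂ : ℂ)‖ ^ 2) -
        ‖(⟪y, e⟫_ℂ : ℂ)‖ * Real.sqrt (‖x‖ ^ 2 - ‖(⟪x, e⟫_ℂ : ℂ)‖ ^ 2)) ^ 2 := by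
  set a : ℂ := ⟪e, x⟫_ℂ with ha
  set b : ℂ := ⟪e, y⟫_ℂ with hb
  set x' : F := x - a • e with hx'
  set y' : F := y - b • e with hy'
  have hee : (⟪e, e⟫_ℂ : ℂ) = 1 := by
    rw [inner_self_eq_norm_sq_to_K, he]; norm_num
  have hex' : (⟪e, x'⟫_ℂ : ℂ) = 0 := by
    simp [hx', inner_sub_right, inner_smul_right, hee, he, ha]
  have hey' : (⟪e, y'⟫_ℂ : ℂ) = 0 := by
    simp [hy', inner_sub_right, inner_smul_right, hee, he, hb]
  have hx'e : (⟪x', e⟫_ℂ : ℂ) = 0 := by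
    rw [← inner_conj_symm, hex', map_zero]
  have hy'e : (⟪y', e⟫_ℂ : ℂ) = 0 := by
    rw [← inner_conj_symm, hey', map_zero]
  have hxdecomp : x = a • e + x' := by simp [hx']
  have hydecomp : y = b • e + y' := by simp [hy']
  have hxa : (⟪x, e⟫_ℂ : ℂ) = conj a := by rw [← inner_conj_symm]
  have hya : (⟪y, e⟫_ℂ : ℂ) = conj b := by rw [← inner_conj_symm]
  have hnae : ‖a • e‖ = ‖a‖ := by rw [norm_smul, he, mul_one]
  have hnbe : ‖b • e‖ = ‖b‖ := by rw [norm_smul, he, mul_one]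
  have h0x : (⟪a • e, x'⟫_ℂ : ℂ) = 0 := by rw [inner_smul_left, hex', mul_zero]
  have h0y : (⟪b • e, y'⟫_ℂ : ℂ) = 0 := by rw [inner_smul_left, hey', mul_zero]
  have hx2 : ‖x‖ ^ 2 = ‖a‖ ^ 2 + ‖x'‖ ^ 2 := by
    rw [hxdecomp]
    have := norm_add_sq_eq_norm_sq_add_norm_sq_of_inner_eq_zero (a • e) x' h0x
    rw [hnae] at this
    nlinarith [this]
  have hy2 : ‖y‖ ^ 2 = ‖b‖ ^ 2 + ‖y'‖ ^ 2 := by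
    rw [hydecomp]
    have := norm_add_sq_eq_norm_sq_add_norm_sq_of_inner_eq_zero (b • e) y' h0y
    rw [hnbe] at this
    nlinarith [this]
  have hxy : (⟪x, y⟫_ℂ : ℂ) = conj a * b + ⟪x', y'⟫_ℂ := by
    conv_lhs => rw [hxdecomp, hydecomp]
    simp [inner_add_left, inner_add_right, inner_smul_left, inner_smul_right, hee,
      hey', hx'e, he]
    ring
  have hCS : ‖(⟪x', y'⟫_ℂ : ℂ)‖ ≤ ‖x'‖ * ‖y'‖ := norm_inner_le_norm _ _
  have htri : ‖(⟪x, y⟫_ℂ : ℂ)‖ ≤ ‖a‖ * ‖b‖ + ‖x'‖ * ‖y'‖ := by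
    rw [hxy]
    calc ‖conj a * b + ⟪x', y'⟫_ℂ‖ ≤ ‖conj a * b‖ + ‖(⟪x', y'⟫_ℂ : ℂ)‖ := norm_add_le _ _
    _ ≤ ‖a‖ * ‖b‖ + ‖x'‖ * ‖y'‖ := by
        rw [norm_mul, RCLike.norm_conj]; exact add_le_add_right hCS _
  have hsx : Real.sqrt (‖x‖ ^ 2 - ‖(⟪x, e⟫_ℂ : ℂ)‖ ^ 2) = ‖x'‖ := by
    rw [hxa, RCLike.norm_conj, hx2]
    simp [Real.sqrt_sq (norm_nonneg x')]
  have hsy : Real.sqrt (‖y‖ ^ 2 - ‖(⟪y, e⟫_ℂ : ℂ)‖ ^ 2) = ‖y'‖ := by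
    rw [hya, RCLike.norm_conj, hy2]
    simp [Real.sqrt_sq (norm_nonneg y')]
  rw [hsx, hsy, hxa, hya, RCLike.norm_conj, RCLike.norm_conj]
  have h1 : ‖(⟪x, y⟫_ℂ : ℂ)‖ ^ 2 ≤ (‖a‖ * ‖b‖ + ‖x'‖ * ‖y'‖) ^ 2 :=
    pow_le_pow_left₀ (norm_nonneg _) htri 2
  nlinarith [hx2, hy2, h1, sq_nonneg (‖a‖ * ‖y'‖ - ‖b‖ * ‖x'‖)]

theorem tuple_schwarz_refinement (n : ℕ) (x y e : Fin n → ℂ)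
    (he : ∑ k, ‖e k‖ ^ 2 = 1) :
    (∑ k, ‖x k‖ ^ 2) * (∑ k, ‖y k‖ ^ 2) -
        ‖∑ k, x k * conj (y k)‖ ^ 2 ≥
      (‖∑ k, x k * conj (e k)‖ *
          Real.sqrt ((∑ k, ‖y k‖ ^ 2) - ‖∑ k, y k * conj (e k)‖ ^ 2) -
        ‖∑ k, y k * conj (e k)‖ *
          Real.sqrt ((∑ k, ‖x k‖ ^ 2) - ‖∑ k, x k * conj (e k)‖ ^ 2)) ^ 2 := by
  have hnorm : ∀ z : EuclideanSpace ℂ (Fin n), ∑ k, ‖z k‖ ^ 2 = ‖z‖ ^ 2 := by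
    intro z
    rw [EuclideanSpace.norm_eq, Real.sq_sqrt (by positivity)]
  have hinner : ∀ z w : EuclideanSpace ℂ (Fin n),
      (∑ k, z k * conj (w k)) = ⟪w, z⟫_ℂ := by
    intro z w
    rw [PiLp.inner_apply]
    simp [RCLike.inner_apply, mul_comm]
  set X : EuclideanSpace ℂ (Fin n) := WithLp.toLp 2 x with hX
  set Y : EuclideanSpace ℂ (Fin n) := WithLp.toLp 2 y with hY
  set E : EuclideanSpace ℂ (Fin n) := WithLp.toLp 2 e with hE
  have hE2 : ‖E‖ ^ 2 = 1 := by rw [← hnorm E]; exact he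
  have hE1 : ‖E‖ = 1 := by nlinarith [norm_nonneg E, sq_nonneg (‖E‖ + 1)]
  have h := key_schwarz_refine X Y E hE1
  rw [show (∑ k, ‖x k‖ ^ 2) = ∑ k, ‖X k‖ ^ 2 from rfl,
    show (∑ k, ‖y k‖ ^ 2) = ∑ k, ‖Y k‖ ^ 2 from rfl,
    show (∑ k, x k * conj (y k)) = ∑ k, X k * conj (Y k) from rfl,
    show (∑ k, x k * conj (e k)) = ∑ k, X k * conj (E k) from rfl,
    show (∑ k, y k * conj (e k)) = ∑ k, Y k * conj (E k) from rfl,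
    hnorm X, hnorm Y, hinner X Y, hinner X E, hinner Y E]
  rw [norm_inner_symm X E, norm_inner_symm Y E, norm_inner_symm X Y] at h
  exact h
end

section
/- For x, y ∈ ℂⁿ and any index m ∈ {1,...,n}: Σ_{k=1}^n|x_k|² · Σ_{k=1}^n|y_k|² − |Σ_{k=1}^n x_k·conj(y_k)|² ≥ (|x_m|·√(Σ_{k≠m}|y_k|²) − |y_m|·√(Σ_{k≠m}|x_k|²))². -/
open scoped ComplexConjugate

theorem tuple_schwarz_refinement_coord (n : ℕ) (x y : Fin n → ℂ) (m : Fin n) :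
    (∑ k, ‖x k‖ ^ 2) * (∑ k, ‖y k‖ ^ 2) -
        ‖∑ k, x k * conj (y k)‖ ^ 2 ≥
      (‖x m‖ * Real.sqrt (∑ k ∈ Finset.univ.erase m, ‖y k‖ ^ 2) -
        ‖y m‖ * Real.sqrt (∑ k ∈ Finset.univ.erase m, ‖x k‖ ^ 2)) ^ 2 := by
  classical
  set s := Finset.univ.erase m with hs
  set A := ∑ k ∈ s, ‖x k‖ ^ 2 with hA
  set B := ∑ k ∈ s, ‖y k‖ ^ 2 with hB
  have hAnn : 0 ≤ A := Finset.sum_nonneg fun i _ => sq_nonneg _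
  have hBnn : 0 ≤ B := Finset.sum_nonneg fun i _ => sq_nonneg _
  set a := ‖x m‖ with ha
  set b := ‖y m‖ with hb
  have hxsum : (∑ k, ‖x k‖ ^ 2) = a ^ 2 + A := by
    rw [hA, ha, ← Finset.add_sum_erase _ _ (Finset.mem_univ m)]
  have hysum : (∑ k, ‖y k‖ ^ 2) = b ^ 2 + B := by
    rw [hB, hb, ← Finset.add_sum_erase _ _ (Finset.mem_univ m)]
  set sa := Real.sqrt A with hsa
  set sb := Real.sqrt B with hsb
  have hsa2 : sa ^ 2 = A := Real.sq_sqrt hAnn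
  have hsb2 : sb ^ 2 = B := Real.sq_sqrt hBnn
  have hsann : 0 ≤ sa := Real.sqrt_nonneg _
  have hsbnn : 0 ≤ sb := Real.sqrt_nonneg _
  -- bound on the tail inner product
  have htail : ‖∑ k ∈ s, x k * conj (y k)‖ ≤ sa * sb := by
    have h1 : ‖∑ k ∈ s, x k * conj (y k)‖ ≤
        ∑ k ∈ s, ‖x k‖ * ‖y k‖ := by
      refine le_trans (norm_sum_le _ _) ?_
      refine Finset.sum_le_sum fun i _ => ?_
      rw [norm_mul, Complex.norm_conj]
    have h2 : (∑ k ∈ s, ‖x k‖ * ‖y k‖) ^ 2 ≤ A * B :=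
      Finset.sum_mul_sq_le_sq_mul_sq s _ _
    have h3 : (∑ k ∈ s, ‖x k‖ * ‖y k‖) ≤ sa * sb := by
      have hnn : 0 ≤ ∑ k ∈ s, ‖x k‖ * ‖y k‖ :=
        Finset.sum_nonneg fun i _ => mul_nonneg (norm_nonneg _) (norm_nonneg _)
      nlinarith [mul_nonneg hsann hsbnn]
    linarith
  have hT : ‖∑ k, x k * conj (y k)‖ ≤ a * b + sa * sb := by
    rw [← Finset.add_sum_erase _ _ (Finset.mem_univ m)]
    calc ‖x m * conj (y m) + ∑ k ∈ s, x k * conj (y k)‖ ≤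
        ‖x m * conj (y m)‖ + ‖∑ k ∈ s, x k * conj (y k)‖ :=
          norm_add_le _ _
      _ ≤ a * b + sa * sb := by
          rw [norm_mul, Complex.norm_conj]; exact add_le_add le_rfl htail
  have hTnn : 0 ≤ ‖∑ k, x k * conj (y k)‖ := norm_nonneg _
  rw [hxsum, hysum, ge_iff_le]
  have hann : 0 ≤ a := norm_nonneg _
  have hbnn : 0 ≤ b := norm_nonneg _
  nlinarith [sq_nonneg (a * sb - b * sa), mul_nonneg hann hbnn, mul_nonneg hsann hsbnn]
end

section
/- For x, y ∈ ℂⁿ: Σ_{k=1}^n|x_k|² · Σ_{k=1}^n|y_k|² − |Σ_{k=1}^n x_k·conj(y_k)|² ≥ n²·(|(1/n)Σ x_k|·√((1/n)Σ|y_k|² − |(1/n)Σ y_k|²) − |(1/n)Σ y_k|·√((1/n)Σ|x_k|² − |(1/n)Σ x_k|²))². -/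
open scoped ComplexConjugate

private lemma aux_ineq' (N p q a b t S : ℝ) (hN : 0 < N) (hp : 0 ≤ p) (hq : 0 ≤ q)
    (ha : 0 ≤ a) (hb : 0 ≤ b)
    (ht : 0 ≤ t) (hS : 0 ≤ S) (hCS : t ≤ p * q) (hsb : S ≤ t + a * b / N) :
    (a * q - b * p) ^ 2 / N ≤ (p ^ 2 + a ^ 2 / N) * (q ^ 2 + b ^ 2 / N) - S ^ 2 := by
  have h1 : S ^ 2 ≤ (t + a * b / N) ^ 2 := pow_le_pow_left₀ hS hsb 2
  have key0 : N * (a * q - b * p) ^ 2 ≤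
      (N * p ^ 2 + a ^ 2) * (N * q ^ 2 + b ^ 2) - (N * t + a * b) ^ 2 := by
    nlinarith [mul_nonneg (mul_nonneg (mul_nonneg hN.le ha) hb) (sub_nonneg.2 hCS),
      mul_nonneg (mul_nonneg (mul_pos hN hN).le (sub_nonneg.2 hCS))
        (by positivity : (0:ℝ) ≤ p * q + t)]
  have e1 : (a * q - b * p) ^ 2 / N = N * (a * q - b * p) ^ 2 / N ^ 2 := by
    field_simp
  have e2 : (p ^ 2 + a ^ 2 / N) * (q ^ 2 + b ^ 2 / N) - (t + a * b / N) ^ 2 =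
      ((N * p ^ 2 + a ^ 2) * (N * q ^ 2 + b ^ 2) - (N * t + a * b) ^ 2) / N ^ 2 := by
    field_simp
  have h2 : (a * q - b * p) ^ 2 / N ≤
      (p ^ 2 + a ^ 2 / N) * (q ^ 2 + b ^ 2 / N) - (t + a * b / N) ^ 2 := by
    rw [e1, e2]; gcongr
  linarith

private lemma mean_dev_sum' (n : ℕ) (hn : 0 < n) (x y : Fin n → ℂ) :
    ∑ k, (x k - (∑ j, x j) / n) * conj (y k - (∑ j, y j) / n) =
      ∑ k, x k * conj (y k) - (∑ j, x j) * conj (∑ j, y j) / n := by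
  have hn' : (n : ℂ) ≠ 0 := Nat.cast_ne_zero.mpr hn.ne'
  set X := ∑ j, x j with hX
  set Y := ∑ j, y j with hY
  have h1 : ∀ k : Fin n, (x k - X / n) * conj (y k - Y / n) =
      x k * conj (y k) - (conj Y / n) * x k - (X / n) * conj (y k)
        + (X / n) * (conj Y / n) := by
    intro k
    simp only [map_sub, map_div₀, Complex.conj_natCast]
    ring
  rw [Finset.sum_congr rfl fun k _ => h1 k]
  rw [Finset.sum_add_distrib, Finset.sum_sub_distrib, Finset.sum_sub_distrib,
    ← Finset.mul_sum, ← Finset.mul_sum, ← hX, ← map_sum, ← hY,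
    Finset.sum_const, Finset.card_univ, Fintype.card_fin]
  field_simp
  have hnn : (n:ℂ)^2 * ((n:ℂ)⁻¹)^2 = 1 := by field_simp
  linear_combination ((starRingEnd ℂ) Y * X) * hnn

private lemma cs' (n : ℕ) (u v : Fin n → ℂ) :
    ‖∑ k, u k * conj (v k)‖ ≤
      Real.sqrt (∑ k, ‖u k‖ ^ 2) * Real.sqrt (∑ k, ‖v k‖ ^ 2) := by
  have h := norm_inner_le_norm (𝕜 := ℂ) (E := EuclideanSpace ℂ (Fin n)) (WithLp.toLp 2 v) (WithLp.toLp 2 u)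
  rw [EuclideanSpace.norm_eq, EuclideanSpace.norm_eq] at h
  simp only [PiLp.inner_apply, RCLike.inner_apply, PiLp.toLp_apply] at h
  have he : (∑ k, (starRingEnd ℂ) (v k) * u k) = ∑ k, u k * conj (v k) := by
    apply Finset.sum_congr rfl; intros; ring
  calc ‖∑ k, u k * conj (v k)‖ ≤
      Real.sqrt (∑ k, ‖v k‖ ^ 2) * Real.sqrt (∑ k, ‖u k‖ ^ 2) := h
    _ = _ := by ring

theorem tuple_schwarz_refinement_mean (n : ℕ) (x y : Fin n → ℂ) :
    (∑ k, ‖x k‖ ^ 2) * (∑ k, ‖y k‖ ^ 2) -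
        ‖∑ k, x k * conj (y k)‖ ^ 2 ≥
      (n : ℝ) ^ 2 *
        (‖(1 / n : ℂ) * ∑ k, x k‖ *
            Real.sqrt ((1 / n) * (∑ k, ‖y k‖ ^ 2) -
              ‖(1 / n : ℂ) * ∑ k, y k‖ ^ 2) -
          ‖(1 / n : ℂ) * ∑ k, y k‖ *
            Real.sqrt ((1 / n) * (∑ k, ‖x k‖ ^ 2) -
              ‖(1 / n : ℂ) * ∑ k, x k‖ ^ 2)) ^ 2 := by
  rcases Nat.eq_zero_or_pos n with h0 | hn
  · subst h0; simp
  have hn' : (n : ℂ) ≠ 0 := Nat.cast_ne_zero.mpr hn.ne'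
  have hnR : (0 : ℝ) < n := by exact_mod_cast hn
  set X : ℂ := ∑ k, x k with hX
  set Y : ℂ := ∑ k, y k with hY
  set A : ℝ := ∑ k, ‖x k‖ ^ 2 with hA
  set B : ℝ := ∑ k, ‖y k‖ ^ 2 with hB
  set s : ℂ := ∑ k, x k * conj (y k) with hs
  set a : ℝ := ‖X‖ with ha
  set b : ℝ := ‖Y‖ with hb
  set u : Fin n → ℂ := fun k => x k - X / n with hu
  set v : Fin n → ℂ := fun k => y k - Y / n with hv
  set P : ℝ := ∑ k, ‖u k‖ ^ 2 with hP
  set Q : ℝ := ∑ k, ‖v k‖ ^ 2 with hQ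
  have hP0 : 0 ≤ P := Finset.sum_nonneg fun k _ => by positivity
  have hQ0 : 0 ≤ Q := Finset.sum_nonneg fun k _ => by positivity
  set p : ℝ := Real.sqrt P with hp
  set q : ℝ := Real.sqrt Q with hq
  set T : ℂ := ∑ k, u k * conj (v k) with hT
  set t : ℝ := ‖T‖ with ht
  -- mean-deviation identities
  have hTs : T = s - X * conj Y / n := mean_dev_sum' n hn x y
  have hPA : P = A - a ^ 2 / n := by
    have h1 : (∑ k, u k * conj (u k)) = (∑ k, x k * conj (x k)) - X * conj X / n :=
      mean_dev_sum' n hn x x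
    have h2 : (∑ k, u k * conj (u k)) = ((P : ℝ) : ℂ) := by
      rw [hP]
      push_cast
      exact Finset.sum_congr rfl fun k _ => by
        rw [Complex.mul_conj, Complex.normSq_eq_norm_sq]; push_cast; ring
    have h3 : (∑ k, x k * conj (x k)) = ((A : ℝ) : ℂ) := by
      rw [hA]
      push_cast
      exact Finset.sum_congr rfl fun k _ => by
        rw [Complex.mul_conj, Complex.normSq_eq_norm_sq]; push_cast; ring
    have h4 : X * conj X = ((a ^ 2 : ℝ) : ℂ) := by
      rw [Complex.mul_conj, ha, Complex.sq_norm]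
    rw [h2, h3, h4] at h1
    exact_mod_cast h1
  have hQB : Q = B - b ^ 2 / n := by
    have h1 : (∑ k, v k * conj (v k)) = (∑ k, y k * conj (y k)) - Y * conj Y / n :=
      mean_dev_sum' n hn y y
    have h2 : (∑ k, v k * conj (v k)) = ((Q : ℝ) : ℂ) := by
      rw [hQ]
      push_cast
      exact Finset.sum_congr rfl fun k _ => by
        rw [Complex.mul_conj, Complex.normSq_eq_norm_sq]; push_cast; ring
    have h3 : (∑ k, y k * conj (y k)) = ((B : ℝ) : ℂ) := by
      rw [hB]
      push_cast
      exact Finset.sum_congr rfl fun k _ => by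
        rw [Complex.mul_conj, Complex.normSq_eq_norm_sq]; push_cast; ring
    have h4 : Y * conj Y = ((b ^ 2 : ℝ) : ℂ) := by
      rw [Complex.mul_conj, hb, Complex.sq_norm]
    rw [h2, h3, h4] at h1
    exact_mod_cast h1
  -- Cauchy-Schwarz on deviations
  have hCS : t ≤ p * q := cs' n u v
  -- bound on |s|
  have hsb : ‖s‖ ≤ t + a * b / n := by
    have : s = T + X * conj Y / n := by rw [hTs]; ring
    rw [this]
    calc ‖T + X * conj Y / n‖ ≤
        ‖T‖ + ‖X * conj Y / n‖ := norm_add_le _ _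
      _ = t + a * b / n := by
        rw [norm_div, norm_mul, Complex.norm_conj, Complex.norm_natCast]
  -- compute the RHS
  have habs1 : ‖(1 / n : ℂ) * X‖ = a / n := by
    rw [norm_mul, norm_div, norm_one, Complex.norm_natCast]; ring
  have habs2 : ‖(1 / n : ℂ) * Y‖ = b / n := by
    rw [norm_mul, norm_div, norm_one, Complex.norm_natCast]; ring
  have harg1 : (1 / (n:ℝ)) * B - (b / n) ^ 2 = Q / n := by
    rw [hQB]; field_simp
  have harg2 : (1 / (n:ℝ)) * A - (a / n) ^ 2 = P / n := by
    rw [hPA]; field_simp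
  have hsq1 : Real.sqrt (Q / n) = q / Real.sqrt n := by
    rw [hq, Real.sqrt_div hQ0]
  have hsq2 : Real.sqrt (P / n) = p / Real.sqrt n := by
    rw [hp, Real.sqrt_div hP0]
  rw [ge_iff_le, habs1, habs2, harg1, harg2, hsq1, hsq2]
  have hsn : Real.sqrt (n:ℝ) ^ 2 = n := Real.sq_sqrt hnR.le
  have hsnpos : (0:ℝ) < Real.sqrt n := Real.sqrt_pos.2 hnR
  have hrhs : (n:ℝ) ^ 2 * (a / n * (q / Real.sqrt n) - b / n * (p / Real.sqrt n)) ^ 2 =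
      (a * q - b * p) ^ 2 / n := by
    have h1 : a / n * (q / Real.sqrt n) - b / n * (p / Real.sqrt n) =
        (a * q - b * p) / (n * Real.sqrt n) := by field_simp; try ring
    rw [h1, div_pow, mul_pow, hsn]
    field_simp
    try ring
  rw [hrhs]
  have hfinal := aux_ineq' n p q a b t (‖s‖) hnR
    (Real.sqrt_nonneg _) (Real.sqrt_nonneg _)
    (norm_nonneg _) (norm_nonneg _)
    (norm_nonneg _) (norm_nonneg _) hCS hsb
  have hp2 : p ^ 2 = P := Real.sq_sqrt hP0
  have hq2 : q ^ 2 = Q := Real.sq_sqrt hQ0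
  have hA' : A = p ^ 2 + a ^ 2 / n := by rw [hp2, hPA]; ring
  have hB' : B = q ^ 2 + b ^ 2 / n := by rw [hq2, hQB]; ring
  calc (a * q - b * p) ^ 2 / n ≤
      (p ^ 2 + a ^ 2 / n) * (q ^ 2 + b ^ 2 / n) - ‖s‖ ^ 2 := hfinal
    _ = A * B - ‖s‖ ^ 2 := by rw [hA', hB']
end

section
/- For vectors x, y in a complex inner product space and an orthogonal projection P (satisfying P² = P = P*), one has ‖x‖‖y‖ − |⟨x,y⟩| ≥ ⟨Px,x⟩^{1/2}⟨Py,y⟩^{1/2} − |⟨Px,y⟩| ≥ 0. -/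
open scoped ComplexConjugate
local notation "⟪" x ", " y "⟫" => @inner ℂ _ _ x y

theorem projection_schwarz_refinement {H : Type*} [NormedAddCommGroup H] [InnerProductSpace ℂ H]
    (P : H →L[ℂ] H) (hP2 : ∀ u, P (P u) = P u)
    (hPsa : ∀ u v : H, ⟪P u, v⟫ = ⟪u, P v⟫) (x y : H) :
    ‖x‖ * ‖y‖ - ‖⟪x, y⟫‖ ≥
      Real.sqrt ((⟪P x, x⟫).re) * Real.sqrt ((⟪P y, y⟫).re) - ‖⟪P x, y⟫‖ ∧
    Real.sqrt ((⟪P x, x⟫).re) * Real.sqrt ((⟪P y, y⟫).re) - ‖⟪P x, y⟫‖ ≥ 0 := by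
  have hx1 : ⟪P x, x⟫ = ⟪P x, P x⟫ := by
    conv_lhs => rw [← hP2 x]
    exact hPsa _ _
  have hy1 : ⟪P y, y⟫ = ⟪P y, P y⟫ := by
    conv_lhs => rw [← hP2 y]
    exact hPsa _ _
  have hxy : ⟪P x, y⟫ = ⟪P x, P y⟫ := by
    conv_lhs => rw [← hP2 x]
    exact hPsa _ _
  have key : ∀ u : H, (⟪u, u⟫).re = ‖u‖ ^ 2 := fun u => by
    simpa using inner_self_eq_norm_sq (𝕜 := ℂ) u
  have hsx : Real.sqrt ((⟪P x, x⟫).re) = ‖P x‖ := by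
    rw [hx1, key]
    exact Real.sqrt_sq (norm_nonneg _)
  have hsy : Real.sqrt ((⟪P y, y⟫).re) = ‖P y‖ := by
    rw [hy1, key]
    exact Real.sqrt_sq (norm_nonneg _)
  set b := x - P x with hb
  set d := y - P y with hd
  have hbd : ⟪x, y⟫ = ⟪P x, y⟫ + ⟪b, d⟫ := by
    have h1 : ⟪x, P y⟫ = ⟪P x, y⟫ := (hPsa x y).symm
    have h2 : ⟪P x, P y⟫ = ⟪P x, y⟫ := hxy.symm
    simp only [hb, hd, inner_sub_left, inner_sub_right, h1, h2]
    ring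
  have hnx : ‖x‖ ^ 2 = ‖P x‖ ^ 2 + ‖b‖ ^ 2 := by
    have h1 : ⟪x, P x⟫ = ⟪P x, x⟫ := (hPsa x x).symm
    have hbb : ⟪b, b⟫ = ⟪x, x⟫ - ⟪P x, x⟫ := by
      simp only [hb, inner_sub_left, inner_sub_right, h1, ← hx1]
      ring
    have := congrArg Complex.re hbb
    rw [show (⟪b, b⟫).re = ‖b‖ ^ 2 from key b] at this
    rw [Complex.sub_re, show (⟪x, x⟫).re = ‖x‖ ^ 2 from key x,
      hx1, show (⟪P x, P x⟫).re = ‖P x‖ ^ 2 from key _] at this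
    linarith
  have hny : ‖y‖ ^ 2 = ‖P y‖ ^ 2 + ‖d‖ ^ 2 := by
    have h1 : ⟪y, P y⟫ = ⟪P y, y⟫ := (hPsa y y).symm
    have hdd : ⟪d, d⟫ = ⟪y, y⟫ - ⟪P y, y⟫ := by
      simp only [hd, inner_sub_left, inner_sub_right, h1, ← hy1]
      ring
    have := congrArg Complex.re hdd
    rw [show (⟪d, d⟫).re = ‖d‖ ^ 2 from key d] at this
    rw [Complex.sub_re, show (⟪y, y⟫).re = ‖y‖ ^ 2 from key y,
      hy1, show (⟪P y, P y⟫).re = ‖P y‖ ^ 2 from key _] at this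
    linarith
  have hcs2 : ‖⟪P x, y⟫‖ ≤ ‖P x‖ * ‖P y‖ := by
    rw [hxy]
    exact norm_inner_le_norm _ _
  have hcsbd : ‖⟪b, d⟫‖ ≤ ‖b‖ * ‖d‖ := by
    exact norm_inner_le_norm _ _
  have habs : ‖⟪x, y⟫‖ ≤ ‖⟪P x, y⟫‖ + ‖b‖ * ‖d‖ := by
    calc ‖⟪x, y⟫‖ ≤ ‖⟪P x, y⟫‖ + ‖⟪b, d⟫‖ := by
          rw [hbd]; exact norm_add_le _ _
      _ ≤ _ := by linarith
  have hprod : ‖x‖ * ‖y‖ ≥ ‖P x‖ * ‖P y‖ + ‖b‖ * ‖d‖ := by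
    nlinarith [sq_nonneg (‖P x‖ * ‖d‖ - ‖b‖ * ‖P y‖), norm_nonneg x, norm_nonneg y,
      norm_nonneg (P x), norm_nonneg (P y), norm_nonneg b, norm_nonneg d,
      sq_nonneg (‖x‖ * ‖y‖ - ‖P x‖ * ‖P y‖ - ‖b‖ * ‖d‖),
      mul_nonneg (norm_nonneg x) (norm_nonneg y),
      mul_nonneg (mul_nonneg (norm_nonneg (P x)) (norm_nonneg (P y)))
        (mul_nonneg (norm_nonneg b) (norm_nonneg d))]
  rw [hsx, hsy]
  constructor
  · linarith
  · linarith
end
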